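/- arXiv:0906.1126 — 8 statements merged into one kernel-verified Lean document; each statement's English description precedes it below -/
import Mathlib

section
/- For all integers m ≥ 12 and n ≥ 18, the chromatic number of the square of the toroidal grid T_{m,n} = C_m □ C_n satisfies χ(T_{m,n}²) ≤ 7. -/
open SimpleGraph

/-- The square of a simple graph `G`: distinct vertices are adjacent iff they are
adjacent in `G` or have a common neighbor in `G` (i.e. are at distance at most 2). -/
def SimpleGraph.square {V : Type*} (G : SimpleGraph V) : SimpleGraph V where
  Adj u v := u ≠ v ∧ (G.Adj u v ∨ ∃ w, G.Adj u w ∧ G.Adj w v)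
  symm := ⟨fun u v => by
    rintro ⟨h, h' | ⟨w, hw1, hw2⟩⟩
    exacts [⟨h.symm, Or.inl h'.symm⟩, ⟨h.symm, Or.inr ⟨w, hw2.symm, hw1.symm⟩⟩]⟩
  loopless := ⟨fun v => by simp⟩

/-- The toroidal grid `T_{m,n} = C_m □ C_n`. -/
def toroidalGrid (m n : ℕ) : SimpleGraph (Fin m × Fin n) :=
  SimpleGraph.cycleGraph m □ SimpleGraph.cycleGraph n

/-- The independence number of a graph: the maximum size of an independent set,
i.e. the clique number of the complement graph. -/
noncomputable def SimpleGraph.indepNumCliqueCompl {V : Type*} (G : SimpleGraph V) : ℕ :=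
  Gᶜ.cliqueNum

/-!
Color the vertex `(i, j)` of `T_{m,n}` by `T(f i, g j)`, where `T` is a fixed `18 × 18` table
with entries in `Fin 7` and `f`, `g` are closed walks of lengths `m`, `n` in a directed graph on
18 states: three directed paths of lengths 5, 6 and 7, the end of each path leading to the start
of every path. Such a closed walk of length `m` exists because every `m ≥ 10` is a sum of 5s, 6s
and 7s. Two vertices at distance at most 2 in `T_{m,n}` map to two pairs of states related by
one of six step patterns, and a finite check shows that `T` separates every such pair.
-/

lemma SimpleGraph.cycleGraph_adj_eq_add_one {k : ℕ} [NeZero k] {u v : Fin k}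
    (h : (cycleGraph k).Adj u v) : v = u + 1 ∨ u = v + 1 := by
  obtain ⟨k, rfl⟩ := Nat.exists_eq_add_one_of_ne_zero (NeZero.ne k)
  rw [cycleGraph_eq_circulantGraph, circulantGraph_adj] at h
  rcases h.2 with h | h <;> rw [Set.mem_singleton_iff] at h
  · exact Or.inr (eq_add_of_sub_eq' h)
  · exact Or.inl (eq_add_of_sub_eq' h)

section SquareStep

variable {α β α' β' : Type*}

/-- Writing `eᵢ` for an `Rᵢ`-step, `q - p` is one of `e₁, 2e₁, e₂, 2e₂, e₁ + e₂, e₁ - e₂`: up to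
sign, these are the nonzero displacements of length at most 2 in a grid. -/
def SquareStep (R₁ : α → α → Prop) (R₂ : β → β → Prop) (p q : α × β) : Prop :=
  (R₁ p.1 q.1 ∨ Relation.Comp R₁ R₁ p.1 q.1) ∧ p.2 = q.2 ∨
    p.1 = q.1 ∧ (R₂ p.2 q.2 ∨ Relation.Comp R₂ R₂ p.2 q.2) ∨
    R₁ p.1 q.1 ∧ (R₂ p.2 q.2 ∨ R₂ q.2 p.2)

lemma SquareStep.map {R₁ : α → α → Prop} {R₂ : β → β → Prop} {R₁' : α' → α' → Prop}
    {R₂' : β' → β' → Prop} {f : α → α'} {g : β → β'} (hf : ∀ ⦃a b⦄, R₁ a b → R₁' (f a) (f b))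
    (hg : ∀ ⦃a b⦄, R₂ a b → R₂' (g a) (g b)) {p q : α × β} (h : SquareStep R₁ R₂ p q) :
    SquareStep R₁' R₂' (Prod.map f g p) (Prod.map f g q) := by
  rcases h with ⟨h | ⟨a, ha, ha'⟩, h₂⟩ | ⟨h₁, h | ⟨b, hb, hb'⟩⟩ | ⟨h₁, h | h⟩
  · exact Or.inl ⟨Or.inl (hf h), congrArg g h₂⟩
  · exact Or.inl ⟨Or.inr ⟨f a, hf ha, hf ha'⟩, congrArg g h₂⟩
  · exact Or.inr (Or.inl ⟨congrArg f h₁, Or.inl (hg h)⟩)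
  · exact Or.inr (Or.inl ⟨congrArg f h₁, Or.inr ⟨g b, hg hb, hg hb'⟩⟩)
  · exact Or.inr (Or.inr ⟨hf h₁, Or.inl (hg h)⟩)
  · exact Or.inr (Or.inr ⟨hf h₁, Or.inr (hg h)⟩)

end SquareStep

lemma squareStep_of_toroidalGrid_square_adj {m n : ℕ} [NeZero m] [NeZero n] {u v : Fin m × Fin n}
    (h : (toroidalGrid m n).square.Adj u v) :
    SquareStep (fun a b => b = a + 1) (fun a b => b = a + 1) u v ∨
      SquareStep (fun a b => b = a + 1) (fun a b => b = a + 1) v u := by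
  obtain ⟨hne, huv | ⟨w, huw, hwv⟩⟩ := h
  · rw [toroidalGrid, boxProd_adj] at huv
    rcases huv with ⟨h₁, h₂⟩ | ⟨h₁, h₂⟩ <;> rcases cycleGraph_adj_eq_add_one h₁ with h | h <;>
      simp [SquareStep, h, h₂]
  · rw [toroidalGrid, boxProd_adj] at huw hwv
    rcases huw with ⟨h₁, e₁⟩ | ⟨h₁, e₁⟩ <;> rcases hwv with ⟨h₂, e₂⟩ | ⟨h₂, e₂⟩ <;>
      rcases cycleGraph_adj_eq_add_one h₁ with h₁ | h₁ <;>
      rcases cycleGraph_adj_eq_add_one h₂ with h₂ | h₂ <;>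
      simp only [SquareStep, Relation.Comp] <;> grind

/-- The states `0–4`, `5–10` and `11–17` form directed paths of lengths 5, 6 and 7; a step
advances along a path, or jumps from the end of a path to the start of any path. -/
def blockStep (s t : Fin 18) : Prop :=
  if (s : ℕ) = 4 ∨ (s : ℕ) = 10 ∨ (s : ℕ) = 17 then (t : ℕ) = 0 ∨ (t : ℕ) = 5 ∨ (t : ℕ) = 11
  else (t : ℕ) = s + 1

instance : DecidableRel blockStep := fun s t => by unfold blockStep; infer_instance

def blockWalk (p q i : ℕ) : Fin 18 :=
  if i < p then ⟨i % 5, by omega⟩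
  else if i < q then ⟨11 + (i - p) % 7, by omega⟩
  else ⟨5 + (i - q) % 6, by omega⟩

section BlockWalk

variable {p q : ℕ}

lemma blockStep_blockWalk_succ (hp : 5 ∣ p) (hpq : 7 ∣ q - p) (hpq' : p ≤ q) (i : ℕ) :
    blockStep (blockWalk p q i) (blockWalk p q (i + 1)) := by
  unfold blockStep blockWalk
  split_ifs <;> dsimp only at * <;> omega

lemma blockStep_blockWalk_zero {m i : ℕ} (hp : 5 ∣ p) (hpq : 7 ∣ q - p) (hqm : 6 ∣ m - q)
    (hpq' : p ≤ q) (hqm' : q ≤ m) (hi : i + 1 = m) :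
    blockStep (blockWalk p q i) (blockWalk p q 0) := by
  unfold blockStep blockWalk
  split_ifs <;> dsimp only at * <;> omega

end BlockWalk

lemma exists_eq_five_mul_add_six_mul_add_seven_mul {m : ℕ} (hm : 10 ≤ m) :
    ∃ a b c, m = 5 * a + 6 * b + 7 * c := by
  induction m using Nat.strong_induction_on with
  | _ m ih =>
    by_cases h : m < 15
    · interval_cases m
      exacts [⟨2, 0, 0, rfl⟩, ⟨1, 1, 0, rfl⟩, ⟨0, 2, 0, rfl⟩, ⟨0, 1, 1, rfl⟩, ⟨0, 0, 2, rfl⟩]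
    · obtain ⟨a, b, c, h⟩ := ih (m - 5) (by omega) (by omega)
      exact ⟨a + 1, b, c, by omega⟩

lemma exists_blockStep_cycle (m : ℕ) [NeZero m] (hm : 10 ≤ m) :
    ∃ f : Fin m → Fin 18, ∀ i, blockStep (f i) (f (i + 1)) := by
  obtain ⟨a, b, c, hm_eq⟩ := exists_eq_five_mul_add_six_mul_add_seven_mul hm
  refine ⟨fun i => blockWalk (5 * a) (5 * a + 7 * c) i, fun i => ?_⟩
  dsimp only
  rw [Fin.val_add, Fin.val_one', Nat.add_mod_mod]
  rcases Nat.lt_or_ge (i + 1) m with h | h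
  · rw [Nat.mod_eq_of_lt h]
    apply blockStep_blockWalk_succ <;> omega
  · rw [show (i : ℕ) + 1 = m by omega, Nat.mod_self]
    apply blockStep_blockWalk_zero (m := m) <;> omega

def stateColorTable : List (List (Fin 7)) :=
  [[1, 0, 5, 6, 3, 1, 0, 2, 1, 0, 4, 1, 0, 5, 2, 0, 6, 3],
    [2, 3, 1, 4, 0, 2, 5, 6, 4, 3, 6, 2, 3, 4, 1, 3, 5, 0],
    [4, 5, 0, 2, 6, 4, 3, 1, 2, 5, 1, 4, 5, 6, 0, 4, 1, 6],
    [0, 2, 6, 1, 5, 0, 2, 5, 0, 4, 3, 0, 2, 1, 5, 2, 3, 5],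
    [6, 4, 3, 0, 2, 6, 4, 3, 6, 2, 5, 6, 4, 3, 6, 1, 4, 2],
    [1, 0, 5, 6, 3, 1, 0, 2, 5, 0, 4, 1, 0, 5, 2, 0, 6, 3],
    [2, 3, 1, 4, 0, 2, 5, 6, 4, 1, 6, 2, 3, 6, 4, 3, 1, 0],
    [4, 6, 2, 3, 5, 4, 1, 0, 3, 2, 5, 4, 1, 0, 5, 6, 2, 5],
    [3, 0, 4, 6, 1, 3, 6, 2, 5, 6, 1, 3, 6, 2, 3, 4, 0, 1],
    [2, 5, 1, 0, 4, 2, 5, 1, 4, 3, 0, 2, 5, 1, 0, 5, 3, 4],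
    [6, 4, 3, 2, 5, 6, 4, 3, 6, 2, 5, 6, 4, 3, 6, 1, 2, 5],
    [3, 0, 5, 6, 1, 3, 0, 2, 5, 1, 4, 3, 0, 5, 2, 3, 0, 1],
    [2, 6, 1, 3, 4, 2, 5, 1, 4, 3, 0, 2, 6, 4, 1, 6, 5, 4],
    [1, 5, 4, 0, 6, 1, 3, 6, 0, 2, 6, 1, 5, 2, 3, 4, 2, 6],
    [4, 3, 2, 1, 5, 4, 0, 5, 3, 1, 5, 4, 3, 0, 5, 1, 0, 5],
    [2, 1, 0, 6, 3, 2, 6, 4, 2, 6, 3, 2, 1, 6, 4, 2, 6, 3],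
    [0, 5, 3, 2, 4, 0, 5, 1, 0, 4, 1, 0, 5, 2, 0, 5, 1, 4],
    [6, 2, 4, 0, 5, 6, 4, 3, 6, 2, 5, 6, 4, 3, 6, 4, 2, 5]]

def stateColor (s : Fin 18 × Fin 18) : Fin 7 :=
  (stateColorTable.getD s.1 []).getD s.2 0

lemma stateColor_ne_of_squareStep {p q : Fin 18 × Fin 18}
    (h : SquareStep blockStep blockStep p q) : stateColor p ≠ stateColor q := by
  have h_e₁ : ∀ x x', blockStep x x' → ∀ y, stateColor (x, y) ≠ stateColor (x', y) := by decide
  have h_two_e₁ : ∀ x x', blockStep x x' → ∀ x'', blockStep x' x'' → ∀ y,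
      stateColor (x, y) ≠ stateColor (x'', y) := by decide
  have h_e₂ : ∀ y y', blockStep y y' → ∀ x, stateColor (x, y) ≠ stateColor (x, y') := by decide
  have h_two_e₂ : ∀ y y', blockStep y y' → ∀ y'', blockStep y' y'' → ∀ x,
      stateColor (x, y) ≠ stateColor (x, y'') := by decide
  have h_diag : ∀ x x', blockStep x x' → ∀ y y', blockStep y y' →
      stateColor (x, y) ≠ stateColor (x', y') := by decide
  have h_antidiag : ∀ x x', blockStep x x' → ∀ y y', blockStep y y' →
      stateColor (x, y') ≠ stateColor (x', y) := by decide
  obtain ⟨x, y⟩ := p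
  obtain ⟨x', y'⟩ := q
  rcases h with ⟨h | ⟨x'', h, h'⟩, rfl⟩ | ⟨rfl, h | ⟨y'', h, h'⟩⟩ | ⟨h, h' | h'⟩
  · exact h_e₁ _ _ h _
  · exact h_two_e₁ _ _ h _ h' _
  · exact h_e₂ _ _ h _
  · exact h_two_e₂ _ _ h _ h' _
  · exact h_diag _ _ h _ _ h'
  · exact h_antidiag _ _ h _ _ h'

theorem stmt1 (m n : ℕ) (hm : 12 ≤ m) (hn : 18 ≤ n) :
    (toroidalGrid m n).square.chromaticNumber ≤ 7 := by
  have : NeZero m := ⟨by omega⟩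
  have : NeZero n := ⟨by omega⟩
  obtain ⟨f, hf⟩ := exists_blockStep_cycle m (by omega)
  obtain ⟨g, hg⟩ := exists_blockStep_cycle n (by omega)
  have hcol : (toroidalGrid m n).square.Colorable 7 := by
    refine ⟨Coloring.mk (stateColor ∘ Prod.map f g) fun {u v} huv => ?_⟩
    have hf' : ∀ ⦃a b : Fin m⦄, b = a + 1 → blockStep (f a) (f b) := by rintro a _ rfl; exact hf a
    have hg' : ∀ ⦃a b : Fin n⦄, b = a + 1 → blockStep (g a) (g b) := by rintro a _ rfl; exact hg a
    rcases squareStep_of_toroidalGrid_square_adj huv with h | h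
    · exact stateColor_ne_of_squareStep (h.map hf' hg')
    · exact (stateColor_ne_of_squareStep (h.map hf' hg')).symm
  exact_mod_cast hcol.chromaticNumber_le
end

section
/- For every integer n ≥ 3, the chromatic number of the square of T_{3,n} = C_3 □ C_n equals: 6 if n is even; 7 if n is odd and n ≥ 7; 8 if n = 5; and 9 if n = 3. -/
open SimpleGraph

/-- The independence number of a graph: the maximum size of an independent set,
i.e. the clique number of the complement graph. -/
noncomputable def SimpleGraph.indepNum' {V : Type*} (G : SimpleGraph V) : ℕ :=
  Gᶜ.cliqueNum

/-!
In the square of `C₃ □ Cₙ` each column is a clique and any two vertices in neighbouring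
columns are adjacent. So an independent set meets at most one vertex per column and never two
consecutive columns, hence has at most `⌊n/2⌋` vertices, and a `k`-colouring forces
`3n ≤ k ⌊n/2⌋`: this gives `k ≥ 6, 7, 8, 9` in the four cases.

The bounds are attained. For even `n` the columns alternate between the palettes `{0,1,2}` and
`{3,4,5}`, and the pair of columns `2p, 2p+1` rotates its palette by a proper 3-colouring of
the cycle of pairs, so that a row never repeats a colour two columns apart. For odd `n ≥ 7`
seven columns coloured `(3j + i) mod 7` are followed by an even number of columns coloured as
in the even case, with rotations alternating between 0 and 2. For `n = 3, 5` the colouring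
`(i + 3j) mod 9`, resp. `mod 8`, works.
-/

open Finset

theorem Nat.mod_cases_of_lt_two_mul {x N : ℕ} (h : x < 2 * N) :
    (x < N ∧ x % N = x) ∨ (N ≤ x ∧ x % N = x - N) := by
  rcases Nat.lt_or_ge x N with hx | hx
  · exact Or.inl ⟨hx, Nat.mod_eq_of_lt hx⟩
  · exact Or.inr ⟨hx, by rw [Nat.mod_eq_sub_mod hx, Nat.mod_eq_of_lt (by omega)]⟩

theorem SimpleGraph.cycleGraph_adj_iff_val {n : ℕ} (hn : 2 ≤ n) {a b : Fin n} :
    (cycleGraph n).Adj a b ↔ b.val = (a.val + 1) % n ∨ a.val = (b.val + 1) % n := by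
  have ha := a.isLt
  have hb := b.isLt
  have := Nat.mod_cases_of_lt_two_mul (N := n) (x := a.val + 1) (by omega)
  have := Nat.mod_cases_of_lt_two_mul (N := n) (x := b.val + 1) (by omega)
  have := Nat.mod_cases_of_lt_two_mul (N := n) (x := n - b.val + a.val) (by omega)
  have := Nat.mod_cases_of_lt_two_mul (N := n) (x := n - a.val + b.val) (by omega)
  rw [cycleGraph_adj', Fin.val_sub, Fin.val_sub]
  omega

theorem val_finRotate {n : ℕ} (j : Fin n) : (finRotate n j).val = (j.val + 1) % n := by
  have := j.neZero
  simp [finRotate_apply, Fin.val_add]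

theorem SimpleGraph.cycleGraph_adj_finRotate {n : ℕ} (hn : 2 ≤ n) (j : Fin n) :
    (cycleGraph n).Adj j (finRotate n j) :=
  (cycleGraph_adj_iff_val hn).2 (Or.inl (val_finRotate j))

theorem Finset.two_mul_card_le_of_disjoint_map {α : Type*} [Fintype α] (e : α ≃ α)
    {s : Finset α} (h : Disjoint s (s.map e.toEmbedding)) : 2 * #s ≤ Fintype.card α := by
  classical
  calc 2 * #s = #(s ∪ s.map e.toEmbedding) := by rw [card_union_of_disjoint h, card_map]; ring
    _ ≤ Fintype.card α := card_le_univ _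

theorem SimpleGraph.Colorable.card_le_mul {V : Type*} [Fintype V] {G : SimpleGraph V} {k a : ℕ}
    (hG : G.Colorable k) (hs : ∀ s : Finset V, G.IsIndepSet s → #s ≤ a) :
    Fintype.card V ≤ k * a := by
  classical
  obtain ⟨C⟩ := hG
  have := card_le_mul_card_image_of_maps_to (s := univ) (t := univ) (fun v _ => mem_univ (C v)) a
    fun c _ => hs _ ?_
  · simpa [mul_comm] using this
  · simpa [Coloring.colorClass] using C.isIndepSet_colorClass c

theorem SimpleGraph.chromaticNumber_eq_of_colorable {V : Type*} {G : SimpleGraph V} {k : ℕ}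
    (hk : G.Colorable k) (h : ∀ m, G.Colorable m → k ≤ m) : G.chromaticNumber = k :=
  le_antisymm hk.chromaticNumber_le (le_chromaticNumber_iff_colorable.2 fun m hm => by
    exact_mod_cast h m hm)

def cycleThreeColoring (m p : ℕ) : ℕ := if p = m - 1 then 2 else p % 2

theorem cycleThreeColoring_lt_three (m p : ℕ) : cycleThreeColoring m p < 3 := by
  unfold cycleThreeColoring; split_ifs <;> omega

theorem cycleThreeColoring_ne {m p q : ℕ} (hm : 2 ≤ m) (hp : p < m)
    (hq : q = p + 1 ∨ p = m - 1 ∧ q = 0) :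
    cycleThreeColoring m p ≠ cycleThreeColoring m q := by
  unfold cycleThreeColoring; split_ifs <;> omega

section TorusSquare

variable {n : ℕ}

theorem toroidalGrid_three_adj_of_fst_ne {i i' : Fin 3} (h : i ≠ i') (j : Fin n) :
    (toroidalGrid 3 n).Adj (i, j) (i', j) :=
  boxProd_adj.2 (Or.inl ⟨by simpa [cycleGraph_three_eq_top] using h, rfl⟩)

theorem toroidalGrid_square_adj_of_adj {m : ℕ} {u v : Fin m × Fin n}
    (h : (toroidalGrid m n).Adj u v) : (toroidalGrid m n).square.Adj u v :=
  ⟨h.ne, Or.inl h⟩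

theorem toroidalGrid_three_square_adj_of_cycleGraph_adj {j j' : Fin n}
    (h : (cycleGraph n).Adj j j') (i i' : Fin 3) :
    (toroidalGrid 3 n).square.Adj (i, j) (i', j') := by
  have hcol : (toroidalGrid 3 n).Adj (i', j) (i', j') := boxProd_adj.2 (Or.inr ⟨h, rfl⟩)
  obtain rfl | hi := eq_or_ne i i'
  · exact toroidalGrid_square_adj_of_adj hcol
  · exact ⟨by simp [h.ne], Or.inr ⟨(i', j), toroidalGrid_three_adj_of_fst_ne hi j, hcol⟩⟩

theorem toroidalGrid_three_square_two_mul_card_le_of_isIndepSet (hn : 2 ≤ n)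
    {s : Finset (Fin 3 × Fin n)} (hs : (toroidalGrid 3 n).square.IsIndepSet s) : 2 * #s ≤ n := by
  classical
  have hinj : Set.InjOn Prod.snd (s : Set (Fin 3 × Fin n)) := by
    rintro ⟨i, j⟩ hu ⟨i', j'⟩ hv (rfl : j = j')
    by_contra hne
    exact hs hu hv hne (toroidalGrid_square_adj_of_adj
      (toroidalGrid_three_adj_of_fst_ne (fun h => hne (by rw [h])) j))
  have hdisj :
      Disjoint (s.image Prod.snd) ((s.image Prod.snd).map (finRotate n).toEmbedding) := by
    simp only [Finset.disjoint_left, mem_map, mem_image, Equiv.toEmbedding_apply]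
    rintro _ ⟨⟨i, j⟩, hu, rfl⟩ ⟨_, ⟨⟨i', j'⟩, hv, rfl⟩, hj⟩
    have hadj :=
      toroidalGrid_three_square_adj_of_cycleGraph_adj (cycleGraph_adj_finRotate hn j') i' i
    rw [hj] at hadj
    exact hs hv hu hadj.ne hadj
  simpa [card_image_of_injOn hinj] using two_mul_card_le_of_disjoint_map (finRotate n) hdisj

theorem toroidalGrid_three_square_three_mul_le_of_colorable (hn : 2 ≤ n) {k : ℕ}
    (hk : (toroidalGrid 3 n).square.Colorable k) : 3 * n ≤ k * (n / 2) := by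
  simpa using hk.card_le_mul fun s hs => (Nat.le_div_iff_mul_le two_pos).2 <| by
    linarith [toroidalGrid_three_square_two_mul_card_le_of_isIndepSet hn hs]

theorem toroidalGrid_three_square_adj_cases (hn : 2 ≤ n) {i i' : Fin 3} {j j' : Fin n}
    (h : (toroidalGrid 3 n).square.Adj (i, j) (i', j')) :
    (j = j' ∧ i ≠ i') ∨ (cycleGraph n).Adj j j' ∨
      (i = i' ∧ (j'.val = (j.val + 2) % n ∨ j.val = (j'.val + 2) % n)) := by
  obtain ⟨hne, hadj | ⟨⟨a, b⟩, h₁, h₂⟩⟩ := h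
  · rcases boxProd_adj.1 hadj with ⟨hi, rfl⟩ | ⟨hj, -⟩
    exacts [Or.inl ⟨rfl, hi.ne⟩, Or.inr (Or.inl hj)]
  rcases boxProd_adj.1 h₁ with ⟨hi₁, rfl⟩ | ⟨hj₁, rfl⟩ <;>
    rcases boxProd_adj.1 h₂ with ⟨hi₂, rfl⟩ | ⟨hj₂, rfl⟩
  · exact Or.inl ⟨rfl, fun hi => hne (by rw [hi])⟩
  · exact Or.inr (Or.inl hj₂)
  · exact Or.inr (Or.inl hj₁)
  · refine Or.inr (Or.inr ⟨rfl, ?_⟩)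
    have hjj : j ≠ j' := fun h => hne (by rw [h])
    dsimp only at hj₁ hj₂
    rw [cycleGraph_adj_iff_val hn] at hj₁ hj₂
    rw [Ne, Fin.ext_iff] at hjj
    have := j.isLt
    have := j'.isLt
    have := b.isLt
    have := Nat.mod_cases_of_lt_two_mul (N := n) (x := j.val + 1) (by omega)
    have := Nat.mod_cases_of_lt_two_mul (N := n) (x := j'.val + 1) (by omega)
    have := Nat.mod_cases_of_lt_two_mul (N := n) (x := b.val + 1) (by omega)
    have := Nat.mod_cases_of_lt_two_mul (N := n) (x := j.val + 2) (by omega)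
    have := Nat.mod_cases_of_lt_two_mul (N := n) (x := j'.val + 2) (by omega)
    omega

theorem toroidalGrid_three_square_colorable_of (hn : 2 ≤ n) {k : ℕ} (c : ℕ → ℕ → ℕ)
    (hlt : ∀ i < 3, ∀ j < n, c i j < k)
    (hcol : ∀ i < 3, ∀ i' < 3, ∀ j < n, i ≠ i' → c i j ≠ c i' j)
    (hnext : ∀ i < 3, ∀ i' < 3, ∀ j < n, c i j ≠ c i' ((j + 1) % n))
    (hrow : ∀ i < 3, ∀ j < n, c i j ≠ c i ((j + 2) % n)) :
    (toroidalGrid 3 n).square.Colorable k := by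
  refine ⟨Coloring.mk (fun v => ⟨c v.1 v.2, hlt _ v.1.isLt _ v.2.isLt⟩) ?_⟩
  rintro ⟨i, j⟩ ⟨i', j'⟩ hadj heq
  replace heq : c i j = c i' j' := congrArg Fin.val heq
  rcases toroidalGrid_three_square_adj_cases hn hadj with ⟨rfl, hi⟩ | hj | ⟨rfl, hj | hj⟩
  · exact hcol _ i.isLt _ i'.isLt _ j.isLt (Fin.val_ne_of_ne hi) heq
  · rcases (cycleGraph_adj_iff_val hn).1 hj with hj | hj
    · exact hnext _ i.isLt _ i'.isLt _ j.isLt (hj ▸ heq)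
    · exact hnext _ i'.isLt _ i.isLt _ j'.isLt (hj ▸ heq.symm)
  · exact hrow _ i.isLt _ j.isLt (hj ▸ heq)
  · exact hrow _ i.isLt _ j'.isLt (hj ▸ heq.symm)

def evenTorusColoring (n i j : ℕ) : ℕ :=
  3 * (j % 2) + (i + cycleThreeColoring (n / 2) (j / 2)) % 3

theorem toroidalGrid_three_square_colorable_six (hn : 3 ≤ n) (hev : Even n) :
    (toroidalGrid 3 n).square.Colorable 6 := by
  have hn2 : n % 2 = 0 := Nat.even_iff.1 hev
  refine toroidalGrid_three_square_colorable_of (by omega) (evenTorusColoring n) ?_ ?_ ?_ ?_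
  · intro i hi j hj
    unfold evenTorusColoring
    omega
  · intro i hi i' hi' j hj hii
    have := cycleThreeColoring_lt_three (n / 2) (j / 2)
    unfold evenTorusColoring
    omega
  · intro i hi i' hi' j hj
    have := Nat.mod_cases_of_lt_two_mul (N := n) (x := j + 1) (by omega)
    unfold evenTorusColoring
    omega
  · intro i hi j hj
    have := Nat.mod_cases_of_lt_two_mul (N := n) (x := j + 2) (by omega)
    have := cycleThreeColoring_lt_three (n / 2) (j / 2)
    have := cycleThreeColoring_lt_three (n / 2) ((j + 2) % n / 2)
    have := cycleThreeColoring_ne (m := n / 2) (p := j / 2) (q := (j + 2) % n / 2)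
      (by omega) (by omega) (by omega)
    unfold evenTorusColoring
    omega

-- The rotation is constant on the column pairs `(n-2, n-1), (n-4, n-3), …` and is 2 on the
-- last pair, which is what makes the wrap-around to columns `0, 1` proper.
def oddTorusColoring (n i j : ℕ) : ℕ :=
  if j < 7 then (3 * j + i) % 7
  else 3 * ((j + 1) % 2) + (i + if (n - 1 - j) % 4 ≤ 1 then 2 else 0) % 3

theorem toroidalGrid_three_square_colorable_seven (hn : 7 ≤ n) (hodd : Odd n) :
    (toroidalGrid 3 n).square.Colorable 7 := by
  have hn2 : n % 2 = 1 := Nat.odd_iff.1 hodd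
  refine toroidalGrid_three_square_colorable_of (by omega) (oddTorusColoring n) ?_ ?_ ?_ ?_
  · intro i hi j hj
    unfold oddTorusColoring
    split_ifs <;> omega
  · intro i hi i' hi' j hj hii
    unfold oddTorusColoring
    split_ifs <;> omega
  · intro i hi i' hi' j hj
    unfold oddTorusColoring
    rcases (by omega : j + 1 < n ∨ j + 1 = n) with h | rfl
    · rw [Nat.mod_eq_of_lt h]
      split_ifs <;> omega
    · rw [Nat.mod_self]
      split_ifs <;> omega
  · intro i hi j hj
    unfold oddTorusColoring
    rcases (by omega : j + 2 < n ∨ j + 2 = n ∨ j + 1 = n) with h | rfl | rfl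
    · rw [Nat.mod_eq_of_lt h]
      split_ifs <;> omega
    · rw [Nat.mod_self]
      split_ifs <;> omega
    · have h : (j + 2) % (j + 1) = 1 := by
        rw [Nat.mod_eq_sub_mod (by omega), Nat.mod_eq_of_lt (by omega)]
        omega
      rw [h]
      split_ifs <;> omega

theorem toroidalGrid_three_three_square_colorable_nine :
    (toroidalGrid 3 3).square.Colorable 9 := by
  refine toroidalGrid_three_square_colorable_of (by norm_num) (fun i j => i + 3 * j)
    ?_ ?_ ?_ ?_ <;> intros <;> omega

theorem toroidalGrid_three_five_square_colorable_eight :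
    (toroidalGrid 3 5).square.Colorable 8 := by
  refine toroidalGrid_three_square_colorable_of (by norm_num) (fun i j => (i + 3 * j) % 8)
    ?_ ?_ ?_ ?_
  · intros; omega
  · intros; omega
  · intro i _ i' _ j hj; interval_cases j <;> omega
  · intro i _ j hj; interval_cases j <;> omega

end TorusSquare

theorem stmt2 (n : ℕ) (hn : 3 ≤ n) :
    (toroidalGrid 3 n).square.chromaticNumber =
      if Even n then 6 else if n = 3 then 9 else if n = 5 then 8 else 7 := by
  have lower (k : ℕ) (hk : (toroidalGrid 3 n).square.Colorable k) : 3 * n ≤ k * (n / 2) :=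
    toroidalGrid_three_square_three_mul_le_of_colorable (by omega) hk
  split_ifs with hev h3 h5
  · refine chromaticNumber_eq_of_colorable (toroidalGrid_three_square_colorable_six hn hev)
      fun k hk => ?_
    obtain ⟨m, rfl⟩ := hev
    have h := lower k hk
    rw [← two_mul, Nat.mul_div_cancel_left _ two_pos, ← mul_assoc] at h
    exact Nat.le_of_mul_le_mul_right h (by omega)
  · subst h3
    exact_mod_cast chromaticNumber_eq_of_colorable toroidalGrid_three_three_square_colorable_nine
      fun k hk => by have := lower k hk; omega
  · subst h5
    exact_mod_cast chromaticNumber_eq_of_colorable toroidalGrid_three_five_square_colorable_eight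
      fun k hk => by have := lower k hk; omega
  · obtain ⟨m, rfl⟩ := Nat.not_even_iff_odd.1 hev
    refine chromaticNumber_eq_of_colorable
      (toroidalGrid_three_square_colorable_seven (by omega) (odd_two_mul_add_one m)) fun k hk => ?_
    have h := lower k hk
    rw [Nat.mul_add_div two_pos, Nat.div_eq_of_lt one_lt_two, add_zero] at h
    exact Nat.lt_of_mul_lt_mul_right (a := m) (by omega)
end

section
/- For all integers k ≥ 1 and n ≥ 3, the chromatic number of the square of T_{3k,n} = C_{3k} □ C_n satisfies: χ(T_{3k,n}²) ≤ 6 if n is even; χ(T_{3k,n}²) ≤ 7 if n is odd and n ≥ 7; χ(T_{3k,n}²) ≤ 8 if n = 5; and χ(T_{3k,n}²) ≤ 9 if n = 3. -/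
open SimpleGraph

/-!
A colouring that depends only on the column and on the row modulo 3 is a periodic sequence of
columns, each an injective map from the three row classes to the colours, such that consecutive
columns are disjoint and columns two apart differ in every row; `i ↦ i % 3` colours the square of
`C_{3k}`, so such a sequence of period `n` colours the square of `T_{3k,n}`. Two sequences of
periods `a` and `b` whose first two columns agree concatenate to one of period `a + b`. Every even
`n ≥ 4` is `4 + 4q` or `6 + 4q` and every odd `n ≥ 7` is `7 + 4q` or `9 + 4q`, so it suffices to
exhibit sequences of periods 4 and 6 with 6 colours and 7 and 9 with 7 colours, all starting with
the same two columns, and single ones of periods 5 and 3 with 8 and 9 colours.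
-/

namespace SimpleGraph

variable {U V : Type*}

theorem square_boxProd_adj {G : SimpleGraph U} {H : SimpleGraph V} {x y : U × V}
    (h : (G □ H).square.Adj x y) :
    (G.square.Adj x.1 y.1 ∧ x.2 = y.2) ∨ (x.1 = y.1 ∧ H.square.Adj x.2 y.2) ∨
      (G.Adj x.1 y.1 ∧ H.Adj x.2 y.2) := by
  obtain ⟨hne, hxy | ⟨z, hxz, hzy⟩⟩ := h
  · rcases boxProd_adj.mp hxy with ⟨hG, h2⟩ | ⟨hH, h1⟩
    · exact Or.inl ⟨⟨hG.ne, Or.inl hG⟩, h2⟩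
    · exact Or.inr (Or.inl ⟨h1, hH.ne, Or.inl hH⟩)
  · rcases boxProd_adj.mp hxz with ⟨hG, h2⟩ | ⟨hH, h1⟩ <;>
      rcases boxProd_adj.mp hzy with ⟨hG', h2'⟩ | ⟨hH', h1'⟩
    · have h2'' := h2.trans h2'
      exact Or.inl ⟨⟨fun h1 => hne (Prod.ext h1 h2''), Or.inr ⟨z.1, hG, hG'⟩⟩, h2''⟩
    · exact Or.inr (Or.inr ⟨h1' ▸ hG, h2 ▸ hH'⟩)
    · exact Or.inr (Or.inr ⟨h1 ▸ hG', h2' ▸ hH⟩)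
    · have h1'' := h1.trans h1'
      exact Or.inr (Or.inl ⟨h1'', fun h2 => hne (Prod.ext h1'' h2), Or.inr ⟨z.2, hH, hH'⟩⟩)

theorem cycleGraph_adj_val {n : ℕ} {i j : Fin n} (h : (cycleGraph n).Adj i j) :
    j.val = (i.val + 1) % n ∨ i.val = (j.val + 1) % n := by
  have : NeZero n := NeZero.of_pos i.pos
  have val_eq (a b : Fin n) : a.val = ((a - b).val + b.val) % n := by
    rw [← Fin.val_add, sub_add_cancel]
  rcases cycleGraph_adj'.mp h with h | h
  · exact Or.inr (by rw [val_eq i j, h, add_comm])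
  · exact Or.inl (by rw [val_eq j i, h, add_comm])

theorem cycleGraph_square_adj_val {n : ℕ} {i j : Fin n} (h : (cycleGraph n).square.Adj i j) :
    (j.val = (i.val + 1) % n ∨ j.val = (i.val + 2) % n) ∨
      (i.val = (j.val + 1) % n ∨ i.val = (j.val + 2) % n) := by
  obtain ⟨hne, hij | ⟨z, hiz, hzj⟩⟩ := h
  · rcases cycleGraph_adj_val hij with h | h
    exacts [Or.inl (Or.inl h), Or.inr (Or.inl h)]
  have hne' : i.val ≠ j.val := Fin.val_ne_of_ne hne
  rcases cycleGraph_adj_val hiz with hz | hi <;> rcases cycleGraph_adj_val hzj with hj | hz'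
  · exact Or.inl (Or.inr (by rw [hj, hz, Nat.mod_add_mod]))
  · refine absurd ?_ hne'
    have : i.val + 1 ≡ j.val + 1 [MOD n] := hz.symm.trans hz'
    simpa [Nat.ModEq, Nat.mod_eq_of_lt i.isLt, Nat.mod_eq_of_lt j.isLt]
      using Nat.ModEq.add_right_cancel' 1 this
  · exact absurd (hi.trans hj.symm) hne'
  · exact Or.inr (Or.inr (by rw [hi, hz', Nat.mod_add_mod]))

def cycleGraphSquareColoring {m : ℕ} (hm : 3 ∣ m) : (cycleGraph m).square.Coloring (Fin 3) :=
  Coloring.mk (fun i => ⟨i.val % 3, Nat.mod_lt _ three_pos⟩) fun {i j} h heq => by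
    have hmod (x : ℕ) : x % m % 3 = x % 3 := Nat.mod_mod_of_dvd x hm
    have heq : i.val % 3 = j.val % 3 := Fin.val_eq_of_eq heq
    rcases cycleGraph_square_adj_val h with (h | h) | (h | h) <;> rw [h, hmod] at heq <;> omega

end SimpleGraph

open Function SimpleGraph Fin.NatCast

section ColumnPattern

variable {U α β γ : Type*}

structure GoodWindow (x y z : β → α) : Prop where
  injective : Injective x
  ne_next (b b' : β) : x b ≠ y b'
  ne_after_next (b : β) : x b ≠ z b

instance [Fintype β] [DecidableEq β] [DecidableEq α] (x y z : β → α) :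
    Decidable (GoodWindow x y z) :=
  decidable_of_iff (Injective x ∧ (∀ b b', x b ≠ y b') ∧ ∀ b, x b ≠ z b)
    ⟨fun ⟨h₁, h₂, h₃⟩ => ⟨h₁, h₂, h₃⟩, fun ⟨h₁, h₂, h₃⟩ => ⟨h₁, h₂, h₃⟩⟩

/-- `w j b` is the colour of the vertices in column `j` whose row has colour `b` in a fixed
colouring of the square of the row graph. -/
structure IsColumnPattern (w : ℕ → β → α) (n : ℕ) : Prop where
  periodic : Periodic w n
  goodWindow : ∀ j, GoodWindow (w j) (w (j + 1)) (w (j + 2))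

namespace IsColumnPattern

variable {w : ℕ → β → α} {n : ℕ}

theorem of_lt (hper : Periodic w n) (hn : 0 < n)
    (h : ∀ j < n, GoodWindow (w j) (w (j + 1)) (w (j + 2))) : IsColumnPattern w n := by
  refine ⟨hper, fun j => ?_⟩
  have hmod (i : ℕ) : w (j % n + i) = w (j + i) := by
    rw [← hper.map_mod_nat (j % n + i), Nat.mod_add_mod, hper.map_mod_nat]
  have := h (j % n) (Nat.mod_lt j hn)
  rwa [hper.map_mod_nat, hmod, hmod] at this

theorem of_fin [NeZero n] (B : Fin n → β → α)
    (h : ∀ j : Fin n, GoodWindow (B j) (B (j + 1)) (B (j + 2))) :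
    IsColumnPattern (fun j : ℕ => B (j : Fin n)) n where
  periodic j := by simp
  goodWindow j := by simpa using h (j : Fin n)

theorem comp_injective (hw : IsColumnPattern w n) {f : α → γ} (hf : Injective f) :
    IsColumnPattern (fun j b => f (w j b)) n where
  periodic j := by simp only [hw.periodic j]
  goodWindow j :=
    let ⟨hinj, hnext, hnext₂⟩ := hw.goodWindow j
    ⟨hf.comp hinj, fun b b' => hf.ne (hnext b b'), fun b => hf.ne (hnext₂ b)⟩

theorem ne_of_adj (hw : IsColumnPattern w n) {i j : Fin n} (h : (cycleGraph n).Adj i j)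
    (b b' : β) : w i b ≠ w j b' := by
  rcases cycleGraph_adj_val h with h | h
  · rw [h, hw.periodic.map_mod_nat]
    exact (hw.goodWindow i).ne_next b b'
  · rw [h, hw.periodic.map_mod_nat]
    exact ((hw.goodWindow j).ne_next b' b).symm

theorem ne_of_square_adj (hw : IsColumnPattern w n) {i j : Fin n}
    (h : (cycleGraph n).square.Adj i j) (b : β) : w i b ≠ w j b := by
  rcases cycleGraph_square_adj_val h with (h | h) | (h | h) <;>
    rw [h, hw.periodic.map_mod_nat]
  exacts [(hw.goodWindow i).ne_next b b, (hw.goodWindow i).ne_after_next b,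
    ((hw.goodWindow j).ne_next b b).symm, ((hw.goodWindow j).ne_after_next b).symm]

def coloring (hw : IsColumnPattern w n) {R : SimpleGraph U} (ρ : R.square.Coloring β) :
    (R □ cycleGraph n).square.Coloring α :=
  Coloring.mk (fun x => w x.2 (ρ x.1)) fun {x y} h => by
    rcases square_boxProd_adj h with ⟨hR, h2⟩ | ⟨h1, hC⟩ | ⟨-, hC⟩
    · rw [h2]
      exact (hw.goodWindow y.2).injective.ne (ρ.valid hR)
    · rw [h1]
      exact hw.ne_of_square_adj hC _
    · exact hw.ne_of_adj hC _ _

end IsColumnPattern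

end ColumnPattern

section CyclicAppend

variable {α β γ : Type*} {u v : ℕ → γ} {a b : ℕ}

def cyclicAppend (u : ℕ → γ) (a : ℕ) (v : ℕ → γ) (b : ℕ) (j : ℕ) : γ :=
  if j % (a + b) < a then u (j % (a + b)) else v (j % (a + b) - a)

theorem cyclicAppend_periodic : Periodic (cyclicAppend u a v b) (a + b) := by
  intro j
  simp only [cyclicAppend, Nat.add_mod_right]

theorem cyclicAppend_of_lt (hu : Periodic u a) (hb : 2 ≤ b) (h₀ : u 0 = v 0) (h₁ : u 1 = v 1)
    {j : ℕ} (hj : j < a + 2) : cyclicAppend u a v b j = u j := by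
  unfold cyclicAppend
  rw [Nat.mod_eq_of_lt (by omega : j < a + b)]
  rcases (by omega : j < a ∨ j = a ∨ j = a + 1) with hj | hj | hj
  · rw [if_pos hj]
  · rw [if_neg (by omega), hj, Nat.sub_self, ← h₀, ← hu.eq]
  · rw [if_neg (by omega), hj, Nat.add_sub_cancel_left, ← h₁, add_comm, hu 1]

theorem cyclicAppend_of_le (hv : Periodic v b) (ha : 2 ≤ a) (h₀ : u 0 = v 0) (h₁ : u 1 = v 1)
    {j : ℕ} (hj : a ≤ j) (hj' : j < a + b + 2) : cyclicAppend u a v b j = v (j - a) := by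
  unfold cyclicAppend
  rcases (by omega : j < a + b ∨ j = a + b ∨ j = a + b + 1) with hj' | hj' | hj'
  · rw [Nat.mod_eq_of_lt hj', if_neg (by omega)]
  · rw [hj', Nat.mod_self, if_pos (by omega), Nat.add_sub_cancel_left, hv.eq, h₀]
  · rw [hj', Nat.add_mod_left, Nat.mod_eq_of_lt (by omega), if_pos (by omega), h₁,
      add_assoc, Nat.add_sub_cancel_left, add_comm, hv 1]

theorem IsColumnPattern.cyclicAppend {u v : ℕ → β → α} (hu : IsColumnPattern u a)
    (hv : IsColumnPattern v b) (ha : 2 ≤ a) (hb : 2 ≤ b) (h₀ : u 0 = v 0) (h₁ : u 1 = v 1) :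
    IsColumnPattern (cyclicAppend u a v b) (a + b) := by
  -- at the seams, the shared first two columns stand in for the wrap-around of `u` and of `v`
  refine .of_lt cyclicAppend_periodic (by omega) fun j hj => ?_
  by_cases hja : j < a
  · rw [cyclicAppend_of_lt hu.periodic hb h₀ h₁ (by omega),
      cyclicAppend_of_lt hu.periodic hb h₀ h₁ (by omega),
      cyclicAppend_of_lt hu.periodic hb h₀ h₁ (by omega)]
    exact hu.goodWindow j
  · rw [cyclicAppend_of_le hv.periodic ha h₀ h₁ (by omega) (by omega),
      cyclicAppend_of_le hv.periodic ha h₀ h₁ (by omega) (by omega),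
      cyclicAppend_of_le hv.periodic ha h₀ h₁ (by omega) (by omega),
      (by omega : j + 1 - a = j - a + 1), (by omega : j + 2 - a = j - a + 2)]
    exact hv.goodWindow (j - a)

theorem IsColumnPattern.exists_add_mul {u v : ℕ → β → α} (hu : IsColumnPattern u a)
    (hv : IsColumnPattern v b) (ha : 2 ≤ a) (hb : 2 ≤ b) (h₀ : u 0 = v 0) (h₁ : u 1 = v 1)
    (q : ℕ) : ∃ w, IsColumnPattern w (a + b * q) ∧ w 0 = v 0 ∧ w 1 = v 1 := by
  induction q with
  | zero => exact ⟨u, hu, h₀, h₁⟩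
  | succ q ih =>
    obtain ⟨w, hw, hw₀, hw₁⟩ := ih
    have hlen : 2 ≤ a + b * q := le_add_right ha
    refine ⟨_root_.cyclicAppend w (a + b * q) v b, ?_, ?_, ?_⟩
    · rw [mul_add_one, ← add_assoc]
      exact hw.cyclicAppend hv hlen hb hw₀ hw₁
    · rw [cyclicAppend_of_lt hw.periodic hb hw₀ hw₁ (by omega), hw₀]
    · rw [cyclicAppend_of_lt hw.periodic hb hw₀ hw₁ (by omega), hw₁]

end CyclicAppend

section Blocks

def block3 : Fin 3 → Fin 3 → Fin 9 := ![![0, 1, 2], ![3, 4, 5], ![6, 7, 8]]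

def block4 : Fin 4 → Fin 3 → Fin 6 := ![![0, 1, 2], ![3, 4, 5], ![1, 2, 0], ![4, 5, 3]]

def block5 : Fin 5 → Fin 3 → Fin 8 :=
  ![![0, 1, 2], ![3, 4, 5], ![6, 7, 0], ![1, 2, 3], ![4, 5, 6]]

def block6 : Fin 6 → Fin 3 → Fin 6 :=
  ![![0, 1, 2], ![3, 4, 5], ![1, 2, 0], ![4, 5, 3], ![2, 0, 1], ![5, 3, 4]]

def block7 : Fin 7 → Fin 3 → Fin 7 :=
  ![![0, 1, 2], ![3, 4, 5], ![6, 0, 1], ![2, 3, 4], ![5, 6, 0], ![1, 2, 3], ![4, 5, 6]]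

-- `block7` followed by its first two columns with the rows rotated
def block9 : Fin 9 → Fin 3 → Fin 7 :=
  ![![0, 1, 2], ![3, 4, 5], ![6, 0, 1], ![2, 3, 4], ![5, 6, 0], ![1, 2, 3], ![4, 5, 6],
    ![2, 0, 1], ![5, 3, 4]]

theorem isColumnPattern_block3 : IsColumnPattern (fun j : ℕ => block3 j) 3 :=
  .of_fin _ (by decide)

theorem isColumnPattern_block4 : IsColumnPattern (fun j : ℕ => block4 j) 4 :=
  .of_fin _ (by decide)

theorem isColumnPattern_block5 : IsColumnPattern (fun j : ℕ => block5 j) 5 :=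
  .of_fin _ (by decide)

theorem isColumnPattern_block6 : IsColumnPattern (fun j : ℕ => block6 j) 6 :=
  .of_fin _ (by decide)

theorem isColumnPattern_block7 : IsColumnPattern (fun j : ℕ => block7 j) 7 :=
  .of_fin _ (by decide)

theorem isColumnPattern_block9 : IsColumnPattern (fun j : ℕ => block9 j) 9 :=
  .of_fin _ (by decide)

end Blocks

theorem exists_isColumnPattern_six_of_even {n : ℕ} (hn : 3 ≤ n) (he : Even n) :
    ∃ w : ℕ → Fin 3 → Fin 6, IsColumnPattern w n := by
  obtain ⟨m, rfl⟩ := he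
  rcases Nat.even_or_odd m with ⟨q, rfl⟩ | ⟨q, rfl⟩
  · obtain ⟨w, hw, -⟩ := isColumnPattern_block4.exists_add_mul isColumnPattern_block4
      (by norm_num) (by norm_num) rfl rfl (q - 1)
    exact ⟨w, by convert hw using 1; omega⟩
  · obtain ⟨w, hw, -⟩ := isColumnPattern_block6.exists_add_mul isColumnPattern_block4
      (by norm_num) (by norm_num) rfl rfl (q - 1)
    exact ⟨w, by convert hw using 1; omega⟩

theorem exists_isColumnPattern_seven_of_odd {n : ℕ} (hn : 7 ≤ n) (ho : Odd n) :
    ∃ w : ℕ → Fin 3 → Fin 7, IsColumnPattern w n := by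
  have step := isColumnPattern_block4.comp_injective (Fin.castSucc_injective 6)
  obtain ⟨m, rfl⟩ := ho
  rcases Nat.even_or_odd m with ⟨q, rfl⟩ | ⟨q, rfl⟩
  · obtain ⟨w, hw, -⟩ := isColumnPattern_block9.exists_add_mul step
      (by norm_num) (by norm_num) (by decide) (by decide) (q - 2)
    exact ⟨w, by convert hw using 1; omega⟩
  · obtain ⟨w, hw, -⟩ := isColumnPattern_block7.exists_add_mul step
      (by norm_num) (by norm_num) (by decide) (by decide) (q - 1)
    exact ⟨w, by convert hw using 1; omega⟩

theorem chromaticNumber_square_toroidalGrid_le {m n c : ℕ} (hm : 3 ∣ m)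
    {w : ℕ → Fin 3 → Fin c} (hw : IsColumnPattern w n) :
    (toroidalGrid m n).square.chromaticNumber ≤ c :=
  Colorable.chromaticNumber_le ⟨hw.coloring (cycleGraphSquareColoring hm)⟩

theorem stmt3_general (k n : ℕ) (hn : 3 ≤ n) :
    (Even n → (toroidalGrid (3 * k) n).square.chromaticNumber ≤ 6) ∧
    (Odd n → 7 ≤ n → (toroidalGrid (3 * k) n).square.chromaticNumber ≤ 7) ∧
    (n = 5 → (toroidalGrid (3 * k) n).square.chromaticNumber ≤ 8) ∧
    (n = 3 → (toroidalGrid (3 * k) n).square.chromaticNumber ≤ 9) := by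
  have hχ {c : ℕ} {w : ℕ → Fin 3 → Fin c} (hw : IsColumnPattern w n) :
      (toroidalGrid (3 * k) n).square.chromaticNumber ≤ c :=
    chromaticNumber_square_toroidalGrid_le (dvd_mul_right 3 k) hw
  refine ⟨fun he => ?_, fun ho h7 => ?_, ?_, ?_⟩
  · obtain ⟨w, hw⟩ := exists_isColumnPattern_six_of_even hn he
    exact_mod_cast hχ hw
  · obtain ⟨w, hw⟩ := exists_isColumnPattern_seven_of_odd h7 ho
    exact_mod_cast hχ hw
  · rintro rfl
    exact_mod_cast hχ isColumnPattern_block5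
  · rintro rfl
    exact_mod_cast hχ isColumnPattern_block3

theorem stmt3 (k n : ℕ) (hk : 1 ≤ k) (hn : 3 ≤ n) :
    (Even n → (toroidalGrid (3 * k) n).square.chromaticNumber ≤ 6) ∧
    (Odd n → 7 ≤ n → (toroidalGrid (3 * k) n).square.chromaticNumber ≤ 7) ∧
    (n = 5 → (toroidalGrid (3 * k) n).square.chromaticNumber ≤ 8) ∧
    (n = 3 → (toroidalGrid (3 * k) n).square.chromaticNumber ≤ 9) :=
  stmt3_general k n hn
end

section
/- For every integer n ≥ 3, the chromatic number of the square of T_{4,n} = C_4 □ C_n equals: 6 if n ≡ 0 (mod 3); 8 if n = 4; and 7 otherwise. -/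
open SimpleGraph

/-- The independence number of a graph: the maximum size of an independent set,
i.e. the clique number of the complement graph. -/
noncomputable def SimpleGraph.indepNumOrig {V : Type*} (G : SimpleGraph V) : ℕ :=
  Gᶜ.cliqueNum

/-!
In a proper coloring of `T_{4,n}²` a color class meets each column at most once, and any three
consecutive columns at most twice: colored cells in neighbouring columns lie in antipodal rows,
so cells in columns `j`, `j + 1`, `j + 2` would put the first and the last in the same row at
distance two. Averaging over the `n` cyclic windows, a color class has at most `⌊2n/3⌋` cells,
hence `4n ≤ k ⌊2n/3⌋`, which forces `k ≥ 6`, `k ≥ 8` for `n = 4`, and `k ≥ 7` when `3 ∤ n`.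
Matching colorings are written column by column as cyclic words; properness is a condition on
windows of three consecutive columns, so a period-3 stripe can be spliced into short words of
length 5 and 7 to reach every length.
-/

theorem three_mul_sum_le_of_window {G : Type*} [AddGroup G] [Fintype G] (a : G → ℕ) {b : ℕ}
    (g h : G) (hab : ∀ x, a x + a (x + g) + a (x + h) ≤ b) :
    3 * ∑ x, a x ≤ Fintype.card G * b :=
  calc 3 * ∑ x, a x = ∑ x, (a x + a (x + g) + a (x + h)) := by
        rw [Finset.sum_add_distrib, Finset.sum_add_distrib,
          Fintype.sum_equiv (Equiv.addRight g) (fun x => a (x + g)) a fun _ => rfl,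
          Fintype.sum_equiv (Equiv.addRight h) (fun x => a (x + h)) a fun _ => rfl]
        ring
    _ ≤ ∑ _x : G, b := Finset.sum_le_sum fun x _ => hab x
    _ = Fintype.card G * b := by simp

section ToroidalGrid

open Fin.CommRing

variable {n : ℕ} [NeZero n]

theorem cycleGraph_four_adj_iff :
    ∀ i i' : Fin 4, (cycleGraph 4).Adj i i' ↔ i' ≠ i ∧ i' ≠ i + 2 := by
  decide

theorem fin_four_add_two_add_two (i : Fin 4) : i + 2 + 2 = i := by
  revert i; decide

theorem cycleGraph_adj_iff_eq_add_one (hn : 2 ≤ n) {j j' : Fin n} :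
    (cycleGraph n).Adj j j' ↔ j' = j + 1 ∨ j = j' + 1 := by
  obtain ⟨m, rfl⟩ : ∃ m, n = m + 2 := ⟨n - 2, by omega⟩
  rw [cycleGraph_adj, sub_eq_iff_eq_add, sub_eq_iff_eq_add, add_comm 1, add_comm 1, or_comm]

theorem toroidalGrid_adj_iff (hn : 2 ≤ n) {i i' : Fin 4} {j j' : Fin n} :
    (toroidalGrid 4 n).Adj (i, j) (i', j') ↔
      (j' = j ∧ i' ≠ i ∧ i' ≠ i + 2) ∨ ((j' = j + 1 ∨ j = j' + 1) ∧ i' = i) := by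
  rw [toroidalGrid, boxProd_adj, cycleGraph_four_adj_iff, cycleGraph_adj_iff_eq_add_one hn]
  grind

def AdjAhead (u v : Fin 4 × Fin n) : Prop :=
  (v.2 = u.2 ∧ v.1 ≠ u.1) ∨ (v.2 = u.2 + 1 ∧ v.1 ≠ u.1 + 2) ∨ (v.2 = u.2 + 2 ∧ v.1 = u.1)

theorem AdjAhead.square_adj (hn : 3 ≤ n) {u v : Fin 4 × Fin n} (h : AdjAhead u v) :
    (toroidalGrid 4 n).square.Adj u v := by
  obtain ⟨i, j⟩ := u
  obtain ⟨i', j'⟩ := v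
  have hadj := @toroidalGrid_adj_iff n _ (by omega)
  have h1 : (1 : Fin n) ≠ 0 := by simp [Fin.ext_iff, Nat.mod_eq_of_lt (show 1 < n by omega)]
  have h2 : (2 : Fin n) ≠ 0 := by simp [Fin.ext_iff, Nat.mod_eq_of_lt (show 2 < n by omega)]
  have hj1 : j + 1 ≠ j := fun h => h1 (add_eq_left.mp h)
  have hj2 : j + 2 ≠ j := fun h => h2 (add_eq_left.mp h)
  simp only [AdjAhead] at h
  rcases h with ⟨hj, hi⟩ | ⟨hj, hi⟩ | ⟨hj, hi⟩ <;> refine ⟨by grind, ?_⟩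
  · by_cases hi2 : i' = i + 2
    · exact Or.inr ⟨(i + 1, j), by grind, by grind⟩
    · exact Or.inl (by grind)
  · by_cases hi2 : i' = i
    · exact Or.inl (by grind)
    · exact Or.inr ⟨(i', j), by grind, by grind⟩
  · exact Or.inr ⟨(i, j + 1), by grind, by grind⟩

theorem toroidalGrid_square_adj_iff (hn : 3 ≤ n) {u v : Fin 4 × Fin n} :
    (toroidalGrid 4 n).square.Adj u v ↔ AdjAhead u v ∨ AdjAhead v u := by
  refine ⟨fun h => ?_, fun h => h.elim (AdjAhead.square_adj hn) fun h => (h.square_adj hn).symm⟩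
  obtain ⟨i, j⟩ := u
  obtain ⟨i', j'⟩ := v
  have hadj := @toroidalGrid_adj_iff n _ (by omega)
  rcases h with ⟨hne, h | ⟨⟨i'', j''⟩, h1, h2⟩⟩ <;> grind [AdjAhead, fin_four_add_two_add_two]

theorem AdjAhead.color_ne {α : Type*} {C : (toroidalGrid 4 n).square.Coloring α} (hn : 3 ≤ n)
    {u v : Fin 4 × Fin n} (h : AdjAhead u v) : C u ≠ C v :=
  C.valid (h.square_adj hn)

section ColorClasses

open Finset

variable {α : Type*} [DecidableEq α] (C : (toroidalGrid 4 n).square.Coloring α)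

def columnCount (c : α) (j : Fin n) : ℕ := #{i | C (i, j) = c}

variable {C}

theorem columnCount_le_one (hn : 3 ≤ n) (c : α) (j : Fin n) : columnCount C c j ≤ 1 := by
  refine Finset.card_le_one.mpr fun i hi i' hi' => ?_
  simp only [Finset.mem_filter, Finset.mem_univ, true_and] at hi hi'
  by_contra hne
  exact AdjAhead.color_ne (u := (i, j)) (v := (i', j)) hn (Or.inl ⟨rfl, Ne.symm hne⟩)
    (hi.trans hi'.symm)

theorem columnCount_add_add_le_two (hn : 3 ≤ n) (c : α) (j : Fin n) :
    columnCount C c j + columnCount C c (j + 1) + columnCount C c (j + 2) ≤ 2 := by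
  suffices ¬(0 < columnCount C c j ∧ 0 < columnCount C c (j + 1) ∧ 0 < columnCount C c (j + 2)) by
    have := columnCount_le_one (C := C) hn c
    grind
  rintro ⟨h₀, h₁, h₂⟩
  obtain ⟨i₀, hi₀⟩ := Finset.card_pos.mp h₀
  obtain ⟨i₁, hi₁⟩ := Finset.card_pos.mp h₁
  obtain ⟨i₂, hi₂⟩ := Finset.card_pos.mp h₂
  simp only [Finset.mem_filter, Finset.mem_univ, true_and] at hi₀ hi₁ hi₂
  have h01 : i₁ = i₀ + 2 := by
    by_contra h
    exact AdjAhead.color_ne hn (Or.inr (Or.inl ⟨rfl, h⟩)) (hi₀.trans hi₁.symm)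
  have h12 : i₂ = i₁ + 2 := by
    by_contra h
    refine AdjAhead.color_ne hn (Or.inr (Or.inl ⟨?_, h⟩)) (hi₁.trans hi₂.symm)
    simp only; ring
  refine AdjAhead.color_ne hn (Or.inr (Or.inr ⟨rfl, ?_⟩)) (hi₀.trans hi₂.symm)
  rw [h12, h01, fin_four_add_two_add_two]

theorem sum_columnCount_le (hn : 3 ≤ n) (c : α) : ∑ j, columnCount C c j ≤ 2 * n / 3 := by
  have := three_mul_sum_le_of_window _ 1 2 (columnCount_add_add_le_two (C := C) hn c)
  simp only [Fintype.card_fin] at this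
  omega

end ColorClasses

theorem four_mul_le_of_colorable (hn : 3 ≤ n) {k : ℕ}
    (h : (toroidalGrid 4 n).square.Colorable k) : 4 * n ≤ k * (2 * n / 3) := by
  obtain ⟨C⟩ := h
  have hcol : ∀ j, ∑ c, columnCount C c j = 4 := fun j =>
    (Finset.card_eq_sum_card_fiberwise fun i _ => Finset.mem_univ (C (i, j))).symm
  calc 4 * n = ∑ c, ∑ j, columnCount C c j := by
        simp [Finset.sum_comm (γ := Fin k), hcol, mul_comm]
    _ ≤ ∑ _c : Fin k, 2 * n / 3 := Finset.sum_le_sum fun c _ => sum_columnCount_le hn c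
    _ = k * (2 * n / 3) := by simp

end ToroidalGrid

namespace List

variable {α : Type*} (R : α → α → α → Prop)

def IsChain3 : List α → Prop
  | a :: b :: c :: l => R a b c ∧ IsChain3 (b :: c :: l)
  | _ => True

instance decidableIsChain3 [∀ a b c, Decidable (R a b c)] : ∀ l, Decidable (IsChain3 R l)
  | a :: b :: c :: l =>
    haveI := decidableIsChain3 (b :: c :: l)
    inferInstanceAs (Decidable (R a b c ∧ _))
  | [] | [_] | [_, _] => isTrue trivial

variable {R}

theorem IsChain3.getElem : ∀ {l : List α}, IsChain3 R l → ∀ i (hi : i + 2 < l.length),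
    R l[i] l[i + 1] l[i + 2]
  | _ :: _ :: _ :: _, h, 0, _ => h.1
  | _ :: b :: c :: l, h, i + 1, hi => IsChain3.getElem (l := b :: c :: l) h.2 i (by simpa using hi)

theorem IsChain3.append_of_overlap {a b : α} {m : List α} : ∀ {l : List α},
    IsChain3 R (l ++ [a, b]) → IsChain3 R (a :: b :: m) → IsChain3 R (l ++ a :: b :: m)
  | [], _, h => h
  | [_], h, h' => ⟨h.1, h'⟩
  | [_, _], h, h' => ⟨h.1, h.2.1, h'⟩
  | _ :: y :: z :: l, h, h' => ⟨h.1, IsChain3.append_of_overlap (l := y :: z :: l) h.2 h'⟩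

theorem getElem_append_take_two {w : List α} (h2 : 2 ≤ w.length) {i : ℕ}
    (hi : i < w.length + 2) :
    (w ++ w.take 2)[i]'(by simp; omega) = w[i % w.length]'(Nat.mod_lt _ (by omega)) := by
  rcases lt_or_ge i w.length with h | h
  · simp [List.getElem_append_left h, Nat.mod_eq_of_lt h]
  · simp [List.getElem_append_right h, Nat.mod_eq_sub_mod h,
      Nat.mod_eq_of_lt (by omega : i - w.length < w.length)]

end List

section Words

variable {κ : Type*}

def ProperWindow (a b c : Fin 4 → κ) : Prop :=
  Function.Injective a ∧ (∀ i i', i' ≠ i + 2 → a i ≠ b i') ∧ ∀ i, a i ≠ c i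

instance [DecidableEq κ] (a b c : Fin 4 → κ) : Decidable (ProperWindow a b c) := by
  unfold ProperWindow; infer_instance

/-- The word `w` encodes the coloring `(i, j) ↦ w[j] i` of `T_{4, w.length}`; appending
`w.take 2` makes the windows wrap around the cycle. -/
def IsCyclicWord (w : List (Fin 4 → κ)) : Prop :=
  (w ++ w.take 2).IsChain3 ProperWindow

instance [DecidableEq κ] (w : List (Fin 4 → κ)) : Decidable (IsCyclicWord w) := by
  unfold IsCyclicWord; infer_instance

theorem IsCyclicWord.append {x y : Fin 4 → κ} {u v : List (Fin 4 → κ)}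
    (hu : IsCyclicWord (x :: y :: u)) (hv : IsCyclicWord (x :: y :: v)) :
    IsCyclicWord (x :: y :: u ++ x :: y :: v) := by
  unfold IsCyclicWord at *
  simpa using hu.append_of_overlap hv

theorem IsCyclicWord.append_flatten_replicate {x y : Fin 4 → κ} {u v : List (Fin 4 → κ)}
    (hu : IsCyclicWord (x :: y :: u)) (hv : IsCyclicWord (x :: y :: v)) (t : ℕ) :
    IsCyclicWord (x :: y :: u ++ (List.replicate t (x :: y :: v)).flatten) := by
  induction t with
  | zero => simpa using hu
  | succ t ih => simpa [List.replicate_succ'] using ih.append hv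

open Fin.CommRing in
theorem IsCyclicWord.colorable {k n : ℕ} {w : List (Fin 4 → Fin k)} (hw : IsCyclicWord w)
    (hwn : w.length = n) (hn : 3 ≤ n) : (toroidalGrid 4 n).square.Colorable k := by
  subst hwn
  have : NeZero w.length := ⟨by omega⟩
  have hwin : ∀ j : Fin w.length, ProperWindow w[j] w[j + 1] w[j + 2] := by
    intro j
    have h2 : 2 ≤ w.length := by omega
    have := hw.getElem j (by simp; omega)
    rw [List.getElem_append_take_two h2 (by omega), List.getElem_append_take_two h2 (by omega),
      List.getElem_append_take_two h2 (by omega)] at this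
    convert this using 2 <;> simp [Fin.val_add, Nat.mod_eq_of_lt j.isLt,
      Nat.mod_eq_of_lt (show 1 < w.length by omega), Nat.mod_eq_of_lt (show 2 < w.length by omega)]
  have hcolor : ∀ u v : Fin 4 × Fin w.length, AdjAhead u v → w[u.2] u.1 ≠ w[v.2] v.1 := by
    rintro ⟨i, j⟩ ⟨i', j'⟩ h
    simp only [AdjAhead] at h
    rcases h with ⟨rfl, hi⟩ | ⟨rfl, hi⟩ | ⟨rfl, rfl⟩
    · exact fun h => hi ((hwin j').1 h).symm
    · exact (hwin j).2.1 i i' hi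
    · exact (hwin j).2.2 i'
  refine ⟨Coloring.mk (fun v => w[v.2] v.1) fun {u v} huv => ?_⟩
  rcases (toroidalGrid_square_adj_iff hn).mp huv with h | h
  exacts [hcolor u v h, (hcolor v u h).symm]

end Words

def stripe (k : ℕ) [NeZero k] : List (Fin 4 → Fin k) :=
  [![0, 1, 2, 3], ![2, 3, 4, 5], ![4, 5, 0, 1]]

def wordFour : List (Fin 4 → Fin 8) :=
  [![0, 1, 2, 3], ![4, 5, 6, 7], ![2, 3, 0, 1], ![6, 7, 4, 5]]

-- `wordFive` and `wordSeven` begin with the first two columns of `stripe`, so that copies of the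
-- stripe can be spliced in by `IsCyclicWord.append_flatten_replicate`.
def wordFive : List (Fin 4 → Fin 7) :=
  [![0, 1, 2, 3], ![2, 3, 4, 5], ![1, 5, 6, 0], ![3, 2, 1, 4], ![5, 4, 0, 6]]

def wordSeven : List (Fin 4 → Fin 7) :=
  [![0, 1, 2, 3], ![2, 3, 4, 5], ![1, 5, 0, 6], ![0, 6, 1, 4], ![3, 4, 2, 5], ![2, 0, 3, 6],
    ![4, 6, 5, 1]]

theorem toroidalGrid_square_colorable_six {n : ℕ} (hn : 3 ≤ n) (h3 : n % 3 = 0) :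
    (toroidalGrid 4 n).square.Colorable 6 := by
  obtain ⟨t, rfl⟩ : ∃ t, n = 3 + 3 * t := ⟨n / 3 - 1, by omega⟩
  have hs : IsCyclicWord (stripe 6) := by decide
  exact (hs.append_flatten_replicate hs t).colorable (by simp; ring) hn

theorem toroidalGrid_four_square_colorable_eight : (toroidalGrid 4 4).square.Colorable 8 :=
  (by decide : IsCyclicWord wordFour).colorable rfl (by norm_num)

theorem toroidalGrid_square_colorable_seven {n : ℕ} (hn : 5 ≤ n) (h3 : n % 3 ≠ 0) :
    (toroidalGrid 4 n).square.Colorable 7 := by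
  have hs : IsCyclicWord (stripe 7) := by decide
  rcases (by omega : n % 3 = 2 ∨ n % 3 = 1) with h | h
  · obtain ⟨t, rfl⟩ : ∃ t, n = 5 + 3 * t := ⟨n / 3 - 1, by omega⟩
    have h5 : IsCyclicWord wordFive := by decide
    exact (h5.append_flatten_replicate hs t).colorable (by simp; ring) (by omega)
  · obtain ⟨t, rfl⟩ : ∃ t, n = 7 + 3 * t := ⟨n / 3 - 2, by omega⟩
    have h7 : IsCyclicWord wordSeven := by decide
    exact (h7.append_flatten_replicate hs t).colorable (by simp; ring) (by omega)

theorem toroidalGrid_square_chromaticNumber_eq {n t : ℕ} (hn : 3 ≤ n)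
    (hc : (toroidalGrid 4 n).square.Colorable t) (ht : (t - 1) * (2 * n / 3) < 4 * n) :
    (toroidalGrid 4 n).square.chromaticNumber = t := by
  have : NeZero n := ⟨by omega⟩
  refine le_antisymm hc.chromaticNumber_le (le_chromaticNumber_iff_colorable.2 fun m hm => ?_)
  have hcount := four_mul_le_of_colorable hn hm
  by_contra hlt
  have := Nat.mul_le_mul_right (2 * n / 3) (show m ≤ t - 1 by omega)
  omega

theorem stmt4 (n : ℕ) (hn : 3 ≤ n) :
    (toroidalGrid 4 n).square.chromaticNumber =
      if n % 3 = 0 then 6 else if n = 4 then 8 else 7 := by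
  split_ifs with h3 h4
  · exact toroidalGrid_square_chromaticNumber_eq hn (toroidalGrid_square_colorable_six hn h3)
      (by norm_num; omega)
  · subst h4
    exact toroidalGrid_square_chromaticNumber_eq hn toroidalGrid_four_square_colorable_eight
      (by norm_num)
  · exact toroidalGrid_square_chromaticNumber_eq hn
      (toroidalGrid_square_colorable_seven (by omega) h3) (by norm_num; omega)
end

section
/- For all integers k ≥ 1 and n ≥ 5, the chromatic number of the square of T_{5k,n} = C_{5k} □ C_n satisfies: χ(T_{5k,n}²) ≤ 5 if n ≡ 0 (mod 5); χ(T_{5k,n}²) ≤ 7 if n = 7; and χ(T_{5k,n}²) ≤ 6 otherwise. -/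
/-!
Reducing the row index modulo 5 maps `T_{5k,n}` onto `T_{5,n}` and is injective on pairs at
distance at most 2, so it pulls colourings of `T_{5,n}²` back to `T_{5k,n}²`. A colouring of
`T_{5,n}²` is a cyclic sequence of `n` columns, each a colouring of `C_5² = K_5`, subject to
conditions between columns at distance 1 and 2. Reading it as a closed walk of length `n` on pairs
of consecutive columns, walks at a common base pair can be concatenated, so their lengths form an
additive semigroup. Explicit walks of length 5 (with 5 colours), of length 7 (with 7 colours) and
of lengths 5, 6, 8, 9 at one base pair (with 6 colours) then give every required `n`.
-/

open SimpleGraph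

namespace Fin

theorem exists_eq_add_two_of_ne {n : ℕ} {u v : Fin n} (h : u ≠ v) : ∃ m, n = m + 2 := by
  have := Fin.val_ne_of_ne h
  exact ⟨n - 2, by omega⟩

theorem ofNat_val_add_one_of_dvd {m p : ℕ} [NeZero p] (hpm : p ∣ m + 2) (v : Fin (m + 2)) :
    Fin.ofNat p (v + 1).val = Fin.ofNat p v.val + 1 := by
  ext
  simp only [Fin.val_ofNat, Fin.val_add, Fin.val_one, Fin.val_one', Nat.mod_mod_of_dvd _ hpm]
  exact Nat.add_mod _ _ _

end Fin

namespace SimpleGraph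

variable {V V' W W' : Type*} {G : SimpleGraph V} {G' : SimpleGraph V'} {H : SimpleGraph W}
  {H' : SimpleGraph W'}

theorem Adj.square {u v : V} (h : G.Adj u v) : G.square.Adj u v := ⟨h.ne, Or.inl h⟩

theorem square_boxProd_adj_s7 {u v : V × W} :
    (G □ H).square.Adj u v ↔
      G.square.Adj u.1 v.1 ∧ u.2 = v.2 ∨ u.1 = v.1 ∧ H.square.Adj u.2 v.2 ∨
        G.Adj u.1 v.1 ∧ H.Adj u.2 v.2 := by
  obtain ⟨u₁, u₂⟩ := u
  obtain ⟨v₁, v₂⟩ := v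
  simp only [square, boxProd_adj, ne_eq, Prod.mk.injEq, Prod.exists]
  constructor
  · aesop
  · rintro (⟨⟨hne, h⟩, rfl⟩ | ⟨rfl, hne, h⟩ | ⟨h₁, h₂⟩)
    · aesop
    · aesop
    · exact ⟨fun h => h₁.ne h.1, Or.inr ⟨v₁, u₂, Or.inl ⟨h₁, rfl⟩, Or.inr ⟨h₂, rfl⟩⟩⟩

def Hom.square (f : G →g G') (hf : ∀ ⦃u v⦄, G.square.Adj u v → f u ≠ f v) :
    G.square →g G'.square where
  toFun := f
  map_rel' {u v} h := by
    obtain ⟨-, huv | ⟨w, huw, hwv⟩⟩ := id h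
    exacts [(f.map_adj huv).square, ⟨hf h, Or.inr ⟨f w, f.map_adj huw, f.map_adj hwv⟩⟩]

def Hom.boxProdMap (f : G →g G') (g : H →g H') : (G □ H) →g (G' □ H') where
  toFun := Prod.map f g
  map_rel' h := by
    rcases boxProd_adj.1 h with ⟨h₁, h₂⟩ | ⟨h₁, h₂⟩
    exacts [boxProd_adj.2 (Or.inl ⟨f.map_adj h₁, congrArg g h₂⟩),
      boxProd_adj.2 (Or.inr ⟨g.map_adj h₁, congrArg f h₂⟩)]

theorem Hom.boxProdMap_ne_of_square_adj (f : G →g G') (g : H →g H')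
    (hf : ∀ ⦃u v⦄, G.square.Adj u v → f u ≠ f v) (hg : ∀ ⦃u v⦄, H.square.Adj u v → g u ≠ g v)
    ⦃u v : V × W⦄ (h : (G □ H).square.Adj u v) : f.boxProdMap g u ≠ f.boxProdMap g v := by
  rcases square_boxProd_adj_s7.1 h with ⟨h₁, -⟩ | ⟨-, h₂⟩ | ⟨h₁, -⟩ <;> intro heq
  exacts [hf h₁ (congrArg Prod.fst heq), hg h₂ (congrArg Prod.snd heq),
    hf h₁.square (congrArg Prod.fst heq)]

theorem cycleGraph_adj_iff_eq_add_one {n : ℕ} {u v : Fin (n + 2)} :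
    (cycleGraph (n + 2)).Adj u v ↔ u = v + 1 ∨ v = u + 1 := by
  rw [cycleGraph_adj, sub_eq_iff_eq_add, sub_eq_iff_eq_add, add_comm 1 v, add_comm 1 u]

theorem cycleGraph_square_adj {n : ℕ} {u v : Fin (n + 2)}
    (h : (cycleGraph (n + 2)).square.Adj u v) :
    u = v + 1 ∨ v = u + 1 ∨ u = v + 1 + 1 ∨ v = u + 1 + 1 := by
  obtain ⟨hne, huv | ⟨w, huw, hwv⟩⟩ := h
  · rcases cycleGraph_adj_iff_eq_add_one.1 huv with h | h <;> simp [h]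
  rcases cycleGraph_adj_iff_eq_add_one.1 huw with rfl | rfl <;>
    rcases cycleGraph_adj_iff_eq_add_one.1 hwv with h | h
  · simp [h]
  · exact absurd h.symm hne
  · exact absurd (add_right_cancel h) hne
  · simp [h]

def cycleGraphCovering {m p : ℕ} [NeZero p] (hpm : p ∣ m) (hp : p ≠ 1) :
    cycleGraph m →g cycleGraph p where
  toFun x := Fin.ofNat p x.val
  map_rel' {u v} h := by
    obtain ⟨m, rfl⟩ := Fin.exists_eq_add_two_of_ne h.ne
    obtain ⟨p, rfl⟩ : ∃ q, p = q + 2 := ⟨p - 2, by have := NeZero.ne p; omega⟩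
    rw [cycleGraph_adj_iff_eq_add_one] at h ⊢
    rcases h with rfl | rfl
    exacts [Or.inl (Fin.ofNat_val_add_one_of_dvd hpm v),
      Or.inr (Fin.ofNat_val_add_one_of_dvd hpm u)]

theorem ofNat_val_ne_of_square_adj {m p : ℕ} [NeZero p] (hpm : p ∣ m) (hp : 3 ≤ p) {u v : Fin m}
    (h : (cycleGraph m).square.Adj u v) : Fin.ofNat p u.val ≠ Fin.ofNat p v.val := by
  obtain ⟨m, rfl⟩ := Fin.exists_eq_add_two_of_ne h.1
  obtain ⟨p, rfl⟩ : ∃ q, p = q + 3 := ⟨p - 3, by omega⟩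
  have h₁ : (1 : Fin (p + 3)) ≠ 0 := by simp
  have h₂ : (1 + 1 : Fin (p + 3)) ≠ 0 := by
    simp [Fin.ext_iff, Fin.val_add, Nat.mod_eq_of_lt (show 2 < p + 3 by omega)]
  rcases cycleGraph_square_adj h with rfl | rfl | rfl | rfl <;>
    simp only [Fin.ofNat_val_add_one_of_dvd hpm] <;>
    simp only [add_assoc, ne_eq, add_eq_left, left_eq_add, h₁, h₂, not_false_eq_true]

theorem chromaticNumber_square_toroidalGrid_le_of_dvd {m p : ℕ} (n : ℕ) (hp : 3 ≤ p)
    (hpm : p ∣ m) :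
    (toroidalGrid m n).square.chromaticNumber ≤ (toroidalGrid p n).square.chromaticNumber := by
  have : NeZero p := ⟨by omega⟩
  let f := (cycleGraphCovering hpm (by omega)).boxProdMap (Hom.id : cycleGraph n →g _)
  exact chromaticNumber_mono_of_hom <| f.square <| Hom.boxProdMap_ne_of_square_adj _ _
    (fun _ _ h => ofNat_val_ne_of_square_adj hpm hp h) (fun _ _ h => h.1)

end SimpleGraph

section ClosedWalks

variable {σ : Type*}

def closedWalkLengths (R : σ → σ → Prop) (b : σ) : AddSubsemigroup ℕ where
  carrier := {n | ∃ t : List σ, t.length + 1 = n ∧ (b :: t ++ [b]).IsChain R}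
  add_mem' := by
    rintro _ _ ⟨t₁, rfl, h₁⟩ ⟨t₂, rfl, h₂⟩
    refine ⟨t₁ ++ b :: t₂, by simp only [List.length_append, List.length_cons]; omega, ?_⟩
    simpa using List.isChain_split.2 ⟨h₁, h₂⟩

theorem exists_rel_add_one_of_mem_closedWalkLengths {R : σ → σ → Prop} {b : σ} {n : ℕ}
    (h : n + 1 ∈ closedWalkLengths R b) : ∃ s : Fin (n + 1) → σ, ∀ j, R (s j) (s (j + 1)) := by
  obtain ⟨t, ht, hc⟩ := h
  have hlen : (b :: t ++ [b]).length = n + 2 := by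
    simp only [List.cons_append, List.length_cons, List.length_append, List.length_nil]; omega
  refine ⟨fun j => (b :: t ++ [b])[j.val], fun j => ?_⟩
  by_cases hj : j = Fin.last n
  · subst hj
    have hb : (b :: t ++ [b])[n + 1] = b := by simp [List.getElem_append_right, ← ht]
    have hlast := hc.getElem n (by omega)
    rw [hb] at hlast
    simpa using hlast
  · simpa [Fin.val_add_one_of_lt (Fin.lt_last_iff_ne_last.2 hj)] using hc.getElem j (by omega)

end ClosedWalks

namespace SimpleGraph

variable {V : Type*} (G : SimpleGraph V)

theorem colorable_square_boxProd_cycleGraph {k n : ℕ} (col : Fin (n + 2) → V → Fin k)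
    (hcol : ∀ j ⦃x y⦄, G.square.Adj x y → col j x ≠ col j y)
    (hstep : ∀ j ⦃x y⦄, x = y ∨ G.Adj x y → col j x ≠ col (j + 1) y)
    (hstep₂ : ∀ j x, col j x ≠ col (j + 1 + 1) x) :
    (G □ cycleGraph (n + 2)).square.Colorable k := by
  refine ⟨Coloring.mk (fun u => col u.2 u.1) fun {u v} h => ?_⟩
  rcases square_boxProd_adj_s7.1 h with ⟨hx, hj⟩ | ⟨hx, hj⟩ | ⟨hx, hj⟩
  · rw [hj]
    exact hcol _ hx
  · rw [hx]
    rcases cycleGraph_square_adj hj with h | h | h | h <;> rw [h]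
    exacts [(hstep _ (Or.inl rfl)).symm, hstep _ (Or.inl rfl), (hstep₂ _ _).symm, hstep₂ _ _]
  · rcases cycleGraph_adj_iff_eq_add_one.1 hj with h | h <;> rw [h]
    exacts [(hstep _ (Or.inr hx.symm)).symm, hstep _ (Or.inr hx)]

/-- A state is a pair of consecutive columns of a colouring of `(G □ C_n)²`, so that the
constraint between columns two apart becomes a condition on a single step. -/
def columnTransfer {α : Type*} (s t : (V → α) × (V → α)) : Prop :=
  s.2 = t.1 ∧ (∀ ⦃x y⦄, G.square.Adj x y → s.1 x ≠ s.1 y) ∧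
    (∀ ⦃x y⦄, x = y ∨ G.Adj x y → s.1 x ≠ s.2 y) ∧ ∀ x, s.1 x ≠ t.2 x

theorem colorable_square_boxProd_cycleGraph_of_mem_closedWalkLengths {k n : ℕ}
    {b : (V → Fin k) × (V → Fin k)} (h : n + 2 ∈ closedWalkLengths (columnTransfer G) b) :
    (G □ cycleGraph (n + 2)).square.Colorable k := by
  obtain ⟨s, hs⟩ := exists_rel_add_one_of_mem_closedWalkLengths h
  refine colorable_square_boxProd_cycleGraph G (fun j => (s j).1) (fun j => (hs j).2.1)
    (fun j x y hxy => ?_) (fun j x => ?_)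
  · rw [← (hs j).1]
    exact (hs j).2.2.1 hxy
  · rw [← (hs (j + 1)).1]
    exact (hs j).2.2.2 x

instance [Fintype V] [DecidableEq V] [DecidableRel G.Adj] : DecidableRel G.square.Adj :=
  fun _ _ => inferInstanceAs (Decidable (_ ∧ _))

instance {α : Type*} [Fintype V] [DecidableEq V] [DecidableRel G.Adj] [DecidableEq α] :
    DecidableRel (columnTransfer G (α := α)) :=
  fun _ _ => inferInstanceAs (Decidable (_ ∧ _))

end SimpleGraph

theorem AddSubsemigroup.mul_succ_mem {S : AddSubsemigroup ℕ} {a : ℕ} (ha : a ∈ S) (q : ℕ) :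
    a * (q + 1) ∈ S := by
  induction q with
  | zero => simpa using ha
  | succ q ih => simpa [Nat.mul_succ] using S.add_mem ih ha

theorem AddSubsemigroup.mem_of_five_six_eight_nine {S : AddSubsemigroup ℕ} (h₅ : 5 ∈ S)
    (h₆ : 6 ∈ S) (h₈ : 8 ∈ S) (h₉ : 9 ∈ S) {n : ℕ} (hn : 5 ≤ n) (h₇ : n ≠ 7) : n ∈ S := by
  induction n using Nat.strong_induction_on with
  | _ n ih =>
    rcases (by omega : n ≤ 9 ∨ n = 12 ∨ 10 ≤ n ∧ n ≠ 12) with h | rfl | h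
    · interval_cases n <;> trivial
    · exact S.add_mem h₆ h₆
    · obtain ⟨m, rfl⟩ : ∃ m, n = m + 5 := ⟨n - 5, by omega⟩
      exact S.add_mem (ih m (by omega) (by omega) (by omega)) h₅

open SimpleGraph

theorem square_toroidalGrid_colorable_of_mem_closedWalkLengths {m n k : ℕ}
    {b : (Fin m → Fin k) × (Fin m → Fin k)}
    (h : n ∈ closedWalkLengths (columnTransfer (cycleGraph m)) b) (hn : 2 ≤ n) :
    (toroidalGrid m n).square.Colorable k := by
  obtain ⟨n, rfl⟩ : ∃ n', n = n' + 2 := ⟨n - 2, by omega⟩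
  exact colorable_square_boxProd_cycleGraph_of_mem_closedWalkLengths _ h

def cyclicPairs {β : Type*} (w : List β) : List (β × β) := w.zip (w.rotate 1)

theorem square_toroidalGrid_five_colorable_five {n : ℕ} (h : 5 ∣ n) (hn : n ≠ 0) :
    (toroidalGrid 5 n).square.Colorable 5 := by
  -- the colouring `(i, j) ↦ i + 2j mod 5`
  have h₅ : 5 ∈ closedWalkLengths (columnTransfer (cycleGraph 5))
      ((![0, 1, 2, 3, 4], ![2, 3, 4, 0, 1]) : (Fin 5 → Fin 5) × (Fin 5 → Fin 5)) :=
    ⟨(cyclicPairs [![0, 1, 2, 3, 4], ![2, 3, 4, 0, 1], ![4, 0, 1, 2, 3], ![1, 2, 3, 4, 0],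
      ![3, 4, 0, 1, 2]]).tail, rfl, by decide⟩
  obtain ⟨q, rfl⟩ : ∃ q, n = 5 * (q + 1) := by
    obtain ⟨c, rfl⟩ := h
    exact ⟨c - 1, by omega⟩
  exact square_toroidalGrid_colorable_of_mem_closedWalkLengths
    (AddSubsemigroup.mul_succ_mem h₅ q) (by omega)

theorem square_toroidalGrid_five_seven_colorable_seven : (toroidalGrid 5 7).square.Colorable 7 :=
  square_toroidalGrid_colorable_of_mem_closedWalkLengths
    (b := (![0, 1, 2, 3, 4], ![2, 3, 4, 0, 1]))
    ⟨(cyclicPairs [![0, 1, 2, 3, 4], ![2, 3, 4, 0, 1], ![4, 0, 1, 5, 6], ![1, 5, 6, 2, 3],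
      ![6, 2, 3, 4, 5], ![3, 4, 5, 6, 0], ![5, 6, 0, 1, 2]]).tail, rfl, by decide⟩ (by norm_num)

theorem square_toroidalGrid_five_colorable_six {n : ℕ} (hn : 5 ≤ n) (h₇ : n ≠ 7) :
    (toroidalGrid 5 n).square.Colorable 6 := by
  -- These walks were found by computer search.
  let S := closedWalkLengths (columnTransfer (cycleGraph 5))
    ((![0, 1, 2, 3, 4], ![2, 3, 4, 0, 5]) : (Fin 5 → Fin 6) × (Fin 5 → Fin 6))
  have h₅ : 5 ∈ S := ⟨(cyclicPairs [![0, 1, 2, 3, 4], ![2, 3, 4, 0, 5], ![1, 0, 5, 2, 3],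
    ![5, 2, 1, 4, 0], ![3, 4, 0, 5, 1]]).tail, rfl, by decide⟩
  have h₆ : 6 ∈ S := ⟨(cyclicPairs [![0, 1, 2, 3, 4], ![2, 3, 4, 0, 5], ![4, 0, 5, 2, 1],
    ![5, 2, 1, 4, 3], ![1, 4, 3, 5, 0], ![3, 5, 0, 1, 2]]).tail, rfl, by decide⟩
  have h₈ : 8 ∈ S := ⟨(cyclicPairs [![0, 1, 2, 3, 4], ![2, 3, 4, 0, 5], ![1, 0, 5, 2, 3],
    ![5, 2, 1, 4, 0], ![4, 3, 0, 5, 1], ![0, 5, 4, 2, 3], ![1, 2, 3, 0, 5],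
    ![3, 4, 5, 1, 2]]).tail, rfl, by decide⟩
  have h₉ : 9 ∈ S := ⟨(cyclicPairs [![0, 1, 2, 3, 4], ![2, 3, 4, 0, 5], ![1, 0, 5, 2, 3],
    ![4, 2, 3, 1, 0], ![3, 1, 0, 4, 2], ![0, 4, 2, 5, 1], ![2, 5, 1, 0, 3], ![1, 0, 3, 4, 5],
    ![3, 4, 5, 1, 2]]).tail, rfl, by decide⟩
  exact square_toroidalGrid_colorable_of_mem_closedWalkLengths
    (AddSubsemigroup.mem_of_five_six_eight_nine h₅ h₆ h₈ h₉ hn h₇) (by omega)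

theorem stmt7_general (k n : ℕ) (hn : 5 ≤ n) :
    (n % 5 = 0 → (toroidalGrid (5 * k) n).square.chromaticNumber ≤ 5) ∧
    (n = 7 → (toroidalGrid (5 * k) n).square.chromaticNumber ≤ 7) ∧
    (n % 5 ≠ 0 → n ≠ 7 → (toroidalGrid (5 * k) n).square.chromaticNumber ≤ 6) := by
  have hred := chromaticNumber_square_toroidalGrid_le_of_dvd n (by norm_num) (dvd_mul_right 5 k)
  refine ⟨fun h₅ => ?_, fun h₇ => ?_, fun _ h₇ => ?_⟩
  · exact hred.trans (square_toroidalGrid_five_colorable_five (Nat.dvd_of_mod_eq_zero h₅)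
      (by omega)).chromaticNumber_le
  · subst h₇
    exact hred.trans square_toroidalGrid_five_seven_colorable_seven.chromaticNumber_le
  · exact hred.trans (square_toroidalGrid_five_colorable_six hn h₇).chromaticNumber_le

theorem stmt7 (k n : ℕ) (hk : 1 ≤ k) (hn : 5 ≤ n) :
    (n % 5 = 0 → (toroidalGrid (5 * k) n).square.chromaticNumber ≤ 5) ∧
    (n = 7 → (toroidalGrid (5 * k) n).square.chromaticNumber ≤ 7) ∧
    (n % 5 ≠ 0 → n ≠ 7 → (toroidalGrid (5 * k) n).square.chromaticNumber ≤ 6) :=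
  stmt7_general k n hn
end

section
/- For all integers k ≥ 1 and n ≥ 6, the chromatic number of the square of T_{6k,n} = C_{6k} □ C_n satisfies χ(T_{6k,n}²) ≤ 6. -/
open SimpleGraph

/-!
Colour the vertex `(i, j)` of `C_m □ C_n` by `i + s j` in `ZMod 6`. Since `6 ∣ m`, the row colour
`i mod 6` is well defined and changes by `±1` along the cycle; the column sequence `s` is
`n`-periodic with steps in `{2, 3, 4}` and `s (j + 2) ≠ s j`. Two distinct vertices at distance at
most two then differ in colour by `±1`, `±2`, a step in `{2, 3, 4}`, `±1` plus such a step, or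
`s (j + 2) - s j`, and none of these is `0`.

Column sequences exist for every period `n ≥ 3`: the words `0 2 4`, `0 3 1 4` and `0 3 5 2 4`
handle `n = 3, 4, 5`, and inserting the triangle `0 2 4` in front of a sequence that starts with
`0` and ends with `4` raises the period by three.
-/

open Function

theorem Function.Periodic.map_val_add_one {α : Type*} {f : ℕ → α} {n : ℕ} (hf : Periodic f n)
    [NeZero n] (u : Fin n) : f ↑(u + 1) = f (↑u + 1) := by
  rw [Fin.val_add, Fin.val_one', Nat.add_mod_mod, hf.map_mod_nat]

namespace SimpleGraph

variable {V W A : Type*} {G : SimpleGraph V} {H : SimpleGraph W}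

section BoxProd

variable [AddGroup A] {f : V → A} {g : W → A}

theorem add_ne_add_of_square_boxProd_adj (hf : ∀ {u v}, G.square.Adj u v → f u ≠ f v)
    (hg : ∀ {u v}, H.square.Adj u v → g u ≠ g v)
    (hfg : ∀ {u v u' v'}, G.Adj u v → H.Adj u' v' → f u + g u' ≠ f v + g v')
    {x y : V × W} (h : (G □ H).square.Adj x y) : f x.1 + g x.2 ≠ f y.1 + g y.2 := by
  obtain ⟨hxy, hadj | ⟨w, hxw, hwy⟩⟩ := h
  · rcases hadj with ⟨h₁, h₂⟩ | ⟨h₂, h₁⟩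
    · rw [h₂]
      exact fun he => hf ⟨h₁.ne, .inl h₁⟩ (add_right_cancel he)
    · rw [h₁]
      exact fun he => hg ⟨h₂.ne, .inl h₂⟩ (add_left_cancel he)
  · rcases hxw with ⟨hxw, hx₂⟩ | ⟨hxw, hx₁⟩ <;> rcases hwy with ⟨hwy, hy₂⟩ | ⟨hwy, hy₁⟩
    · have hne : x.1 ≠ y.1 := fun he => hxy (Prod.ext he (hx₂.trans hy₂))
      rw [hx₂, ← hy₂]
      exact fun he => hf ⟨hne, .inr ⟨w.1, hxw, hwy⟩⟩ (add_right_cancel he)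
    · rw [hy₁] at hxw
      rw [← hx₂] at hwy
      exact hfg hxw hwy
    · rw [← hx₁] at hwy
      rw [hy₂] at hxw
      exact hfg hwy hxw
    · have hne : x.2 ≠ y.2 := fun he => hxy (Prod.ext (hx₁.trans hy₁) he)
      rw [hx₁, ← hy₁]
      exact fun he => hg ⟨hne, .inr ⟨w.2, hxw, hwy⟩⟩ (add_left_cancel he)

theorem colorable_square_boxProd [Fintype A] (hf : ∀ {u v}, G.square.Adj u v → f u ≠ f v)
    (hg : ∀ {u v}, H.square.Adj u v → g u ≠ g v)
    (hfg : ∀ {u v u' v'}, G.Adj u v → H.Adj u' v' → f u + g u' ≠ f v + g v') :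
    (G □ H).square.Colorable (Fintype.card A) :=
  (Coloring.mk (fun x => f x.1 + g x.2)
    fun h => add_ne_add_of_square_boxProd_adj hf hg hfg h).colorable

end BoxProd

section Cycle

variable [AddGroup A] {s : ℕ → A} {n : ℕ}

theorem eq_add_one_or_eq_add_one_of_cycleGraph_adj [NeZero n] {u v : Fin n}
    (h : (cycleGraph n).Adj u v) : v = u + 1 ∨ u = v + 1 := by
  obtain _ | _ | n := n
  · exact u.elim0
  · exact (cycleGraph_one_adj h).elim
  · rw [cycleGraph_adj, sub_eq_iff_eq_add, sub_eq_iff_eq_add] at h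
    rw [add_comm v, add_comm u]
    exact h.symm

theorem sub_mem_of_cycleGraph_adj (hs : Periodic s n) {D : Set A} (hD : ∀ x ∈ D, -x ∈ D)
    (hstep : ∀ t, s (t + 1) - s t ∈ D) {u v : Fin n} (h : (cycleGraph n).Adj u v) :
    s v - s u ∈ D := by
  have : NeZero n := NeZero.of_pos u.pos
  rcases eq_add_one_or_eq_add_one_of_cycleGraph_adj h with rfl | rfl
  · rw [hs.map_val_add_one]
    exact hstep u
  · rw [hs.map_val_add_one, ← neg_sub]
    exact hD _ (hstep v)

theorem sub_mem_of_cycleGraph_adj_adj (hs : Periodic s n) {D : Set A} (hD : ∀ x ∈ D, -x ∈ D)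
    (hskip : ∀ t, s (t + 2) - s t ∈ D) {u w v : Fin n} (huw : (cycleGraph n).Adj u w)
    (hwv : (cycleGraph n).Adj w v) (huv : u ≠ v) : s v - s u ∈ D := by
  have : NeZero n := NeZero.of_pos u.pos
  rcases eq_add_one_or_eq_add_one_of_cycleGraph_adj huw with rfl | rfl <;>
    rcases eq_add_one_or_eq_add_one_of_cycleGraph_adj hwv with rfl | h
  · rw [hs.map_val_add_one, (hs.add_const 1).map_val_add_one, add_assoc]
    exact hskip u
  · exact (huv (add_right_cancel h)).elim
  · exact (huv rfl).elim
  · rw [h, hs.map_val_add_one, (hs.add_const 1).map_val_add_one, add_assoc, ← neg_sub]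
    exact hD _ (hskip v)

theorem ne_of_cycleGraph_square_adj (hs : Periodic s n) (hstep : ∀ t, s (t + 1) ≠ s t)
    (hskip : ∀ t, s (t + 2) ≠ s t) {u v : Fin n} (h : (cycleGraph n).square.Adj u v) :
    s u ≠ s v := by
  have hD : ∀ x ∈ ({0}ᶜ : Set A), -x ∈ ({0}ᶜ : Set A) := by simp
  suffices s v - s u ∈ ({0}ᶜ : Set A) from fun he => this (sub_eq_zero.mpr he.symm)
  obtain ⟨huv, hadj | ⟨w, huw, hwv⟩⟩ := h
  · exact sub_mem_of_cycleGraph_adj hs hD (fun t => sub_ne_zero.mpr (hstep t)) hadj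
  · exact sub_mem_of_cycleGraph_adj_adj hs hD (fun t => sub_ne_zero.mpr (hskip t)) huw hwv huv

end Cycle

end SimpleGraph

def ColumnAdmissible (a b c : ZMod 6) : Prop :=
  b - a ∈ ({2, 3, 4} : Finset (ZMod 6)) ∧ c ≠ a

instance (a b c : ZMod 6) : Decidable (ColumnAdmissible a b c) :=
  inferInstanceAs (Decidable (_ ∧ _))

structure IsColumnPattern_s9 (s : ℕ → ZMod 6) (n : ℕ) : Prop where
  periodic : Periodic s n
  admissible : ∀ t, ColumnAdmissible (s t) (s (t + 1)) (s (t + 2))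

theorem isColumnPattern_of_forall_lt {s : ℕ → ZMod 6} {n : ℕ} (hs : Periodic s n) (hn : 0 < n)
    (h : ∀ t < n, ColumnAdmissible (s t) (s (t + 1)) (s (t + 2))) : IsColumnPattern_s9 s n := by
  refine ⟨hs, fun t => ?_⟩
  obtain ⟨r, hr, q, rfl⟩ : ∃ r < n, ∃ q, t = r + q * n :=
    ⟨t % n, Nat.mod_lt t hn, t / n, (Nat.mod_add_div' t n).symm⟩
  have hq : ∀ x, s (x + q * n) = s x := hs.nat_mul q
  simpa only [add_right_comm r (q * n), hq] using h r hr

def cyclicWord (w : List (ZMod 6)) (t : ℕ) : ZMod 6 :=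
  w.getD (t % w.length) 0

theorem periodic_cyclicWord (w : List (ZMod 6)) : Periodic (cyclicWord w) w.length := by
  intro t
  simp [cyclicWord]

def prependTriangle (s : ℕ → ZMod 6) (y : ℕ) : ZMod 6 :=
  if y < 3 then 2 * y else s (y - 3)

theorem isColumnPattern_prependTriangle {s : ℕ → ZMod 6} {n : ℕ} (hs : IsColumnPattern_s9 s n)
    (hn : 2 ≤ n) (h0 : s 0 = 0) (hlast : s (n - 1) = 4) :
    IsColumnPattern_s9 (fun t => prependTriangle s (t % (n + 3))) (n + 3) := by
  refine isColumnPattern_of_forall_lt (fun t => by simp) (by omega) fun t ht => ?_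
  have hwrap : s n = 0 := hs.periodic.eq.trans h0
  have hbefore_wrap : ColumnAdmissible (s (n - 2)) 4 0 := by
    have := hs.admissible (n - 2)
    rwa [show n - 2 + 1 = n - 1 by omega, show n - 2 + 2 = n by omega, hlast, hwrap] at this
  have hafter_wrap : ColumnAdmissible 4 0 (s 1) := by
    have := hs.admissible (n - 1)
    rwa [hlast, Nat.sub_add_cancel (by omega), show n - 1 + 2 = 1 + n by omega, hs.periodic,
      hwrap] at this
  rcases (by omega : t ≤ n ∨ t = n + 1 ∨ t = n + 2) with ht | rfl | rfl
  · simp only [Nat.mod_eq_of_lt (by omega : t < n + 3),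
      Nat.mod_eq_of_lt (by omega : t + 1 < n + 3), Nat.mod_eq_of_lt (by omega : t + 2 < n + 3)]
    rcases (by omega : t = 0 ∨ t = 1 ∨ t = 2 ∨ 3 ≤ t) with rfl | rfl | rfl | ht3
    · simp [prependTriangle]; decide
    · simp [prependTriangle, h0]; decide
    · simpa [prependTriangle, h0, show (2 * 2 : ZMod 6) = 4 by decide] using hafter_wrap
    · obtain ⟨z, rfl⟩ : ∃ z, t = z + 3 := ⟨t - 3, by omega⟩
      simpa [prependTriangle, add_right_comm z 3] using hs.admissible z
  · rw [Nat.mod_eq_of_lt (by omega), Nat.mod_eq_of_lt (by omega), add_assoc, Nat.mod_self]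
    simpa [prependTriangle, show ¬ n + 1 < 3 by omega, show ¬ n + 2 < 3 by omega,
      show n + 1 - 3 = n - 2 by omega, show n + 2 - 3 = n - 1 by omega, hlast] using hbefore_wrap
  · rw [Nat.mod_eq_of_lt (by omega), show n + 2 + 1 = n + 3 by omega, Nat.mod_self,
      show n + 2 + 2 = 1 + (n + 3) by omega, Nat.add_mod_right]
    simp [prependTriangle, show ¬ n + 2 < 3 by omega, show n + 2 - 3 = n - 1 by omega, hlast]
    decide

theorem exists_isColumnPattern {n : ℕ} (hn : 3 ≤ n) :
    ∃ s, IsColumnPattern_s9 s n ∧ s 0 = 0 ∧ s (n - 1) = 4 := by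
  induction n using Nat.strong_induction_on with
  | _ n ih =>
  by_cases hsmall : n < 6
  · interval_cases n
    · exact ⟨cyclicWord [0, 2, 4], isColumnPattern_of_forall_lt (periodic_cyclicWord _)
        (by decide) (by decide), by decide, by decide⟩
    · exact ⟨cyclicWord [0, 3, 1, 4], isColumnPattern_of_forall_lt (periodic_cyclicWord _)
        (by decide) (by decide), by decide, by decide⟩
    · exact ⟨cyclicWord [0, 3, 5, 2, 4], isColumnPattern_of_forall_lt (periodic_cyclicWord _)
        (by decide) (by decide), by decide, by decide⟩
  · obtain ⟨m, rfl⟩ : ∃ m, n = m + 3 := ⟨n - 3, by omega⟩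
    obtain ⟨s, hs, h0, hlast⟩ := ih m (by omega) (by omega)
    refine ⟨_, isColumnPattern_prependTriangle hs (by omega) h0 hlast, ?_, ?_⟩
    · simp [prependTriangle]
    · simp [prependTriangle, show m + 3 - 1 = m + 2 by omega, show ¬m + 2 < 3 by omega,
        show m + 2 - 3 = m - 1 by omega, hlast]

namespace IsColumnPattern_s9

variable {s : ℕ → ZMod 6} {n : ℕ}

theorem sub_mem (hs : IsColumnPattern_s9 s n) {u v : Fin n} (h : (cycleGraph n).Adj u v) :
    s v - s u ∈ ({2, 3, 4} : Finset (ZMod 6)) :=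
  sub_mem_of_cycleGraph_adj hs.periodic (by decide) (fun t => (hs.admissible t).1) h

theorem ne_of_square_adj_s9 (hs : IsColumnPattern_s9 s n) {u v : Fin n}
    (h : (cycleGraph n).square.Adj u v) : s u ≠ s v :=
  ne_of_cycleGraph_square_adj hs.periodic
    (fun t he => absurd (hs.admissible t).1 (by rw [he, sub_self]; decide))
    (fun t => (hs.admissible t).2) h

end IsColumnPattern_s9

theorem ZMod.periodic_natCast_of_dvd {d m : ℕ} (h : d ∣ m) :
    Periodic (fun t : ℕ => (t : ZMod d)) m := fun t => by
  simp [(ZMod.natCast_eq_zero_iff m d).mpr h]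

theorem colorable_square_toroidalGrid {m n : ℕ} (hm : 6 ∣ m) {s : ℕ → ZMod 6}
    (hs : IsColumnPattern_s9 s n) : (toroidalGrid m n).square.Colorable 6 := by
  have hrow := ZMod.periodic_natCast_of_dvd hm
  have hrow_sub {u v : Fin m} (h : (cycleGraph m).Adj u v) :
      (v : ZMod 6) - u ∈ ({1, -1} : Finset (ZMod 6)) :=
    sub_mem_of_cycleGraph_adj hrow (by decide) (fun t => by simp) h
  have hmixed : ∀ a ∈ ({1, -1} : Finset (ZMod 6)), ∀ b ∈ ({2, 3, 4} : Finset (ZMod 6)),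
      a + b ≠ 0 := by decide
  rw [toroidalGrid, ← ZMod.card 6]
  exact colorable_square_boxProd (f := fun i : Fin m => ((i : ℕ) : ZMod 6))
    (g := fun j : Fin n => s j)
    (ne_of_cycleGraph_square_adj hrow (fun t => by simp; decide) (fun t => by simp; decide))
    hs.ne_of_square_adj_s9
    (fun hr hc he => hmixed _ (hrow_sub hr) _ (hs.sub_mem hc) (by linear_combination -he))

theorem stmt9_general (k n : ℕ) (hn : 6 ≤ n) :
    (toroidalGrid (6 * k) n).square.chromaticNumber ≤ 6 := by
  obtain ⟨s, hs, -⟩ := exists_isColumnPattern (by omega : 3 ≤ n)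
  exact_mod_cast (colorable_square_toroidalGrid (dvd_mul_right 6 k) hs).chromaticNumber_le

theorem stmt9 (k n : ℕ) (hk : 1 ≤ k) (hn : 6 ≤ n) :
    (toroidalGrid (6 * k) n).square.chromaticNumber ≤ 6 :=
  stmt9_general k n hn
end

section
/- For all integers m, n ≥ 3, the chromatic number of the square of T_{m,n} = C_m □ C_n satisfies χ(T_{m,n}²) ≥ 5; moreover, χ(T_{m,n}²) = 5 if and only if m ≡ 0 (mod 5) and n ≡ 0 (mod 5). -/
open SimpleGraph

/-!
A closed neighbourhood of `T_{m,n}` is a 5-clique of the square, so `χ ≥ 5`, and in a 5-colouring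
every colour class is a perfect code: it meets every closed neighbourhood exactly once. A local case
analysis shows that a perfect code containing `v` and `v + (1, 2)` also contains `v + (2, -1)` and
`v + (2, 4)`, hence the whole coset through `v` of the index-5 lattice `x + 2y ≡ 0 (mod 5)`; up to
transposing the torus, every perfect code contains such a pair. If `5 ∤ m`, this lattice contains a
point `(m, j)` with `0 < |j| ≤ 2`, which is `(0, j)` on the torus, contradicting the distance
condition; likewise for `n`. Conversely, `(x, y) ↦ x + 2y mod 5` is a proper colouring when `5`
divides both `m` and `n`.
-/

open Fin.CommRing

lemma Fin.intCast_ne_zero_of_natAbs_lt {m : ℕ} [NeZero m] {c : ℤ} (hc : c ≠ 0)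
    (hcm : c.natAbs < m) : (c : Fin m) ≠ 0 := by
  rw [Ne, CharP.intCast_eq_zero_iff (Fin m) m]
  exact fun h => Nat.not_dvd_of_pos_of_lt (Int.natAbs_pos.mpr hc) hcm (Int.natCast_dvd.mp h)

namespace ToroidalGrid

def unitSteps : List (ℤ × ℤ) := [(1, 0), (-1, 0), (0, 1), (0, -1)]

def shortSteps : List (ℤ × ℤ) :=
  [(1, 0), (-1, 0), (0, 1), (0, -1), (2, 0), (-2, 0), (0, 2), (0, -2),
    (1, 1), (1, -1), (-1, 1), (-1, -1)]

def plus : Fin 5 → ℤ × ℤ := ![(0, 0), (1, 0), (-1, 0), (0, 1), (0, -1)]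

lemma unitSteps_subset_shortSteps : ∀ e ∈ unitSteps, e ∈ shortSteps := by decide

lemma add_unitSteps : ∀ e ∈ unitSteps, ∀ e' ∈ unitSteps, e + e' = 0 ∨ e + e' ∈ shortSteps := by
  decide

lemma shortSteps_eq_add_unitSteps : ∀ d ∈ shortSteps,
    d ∈ unitSteps ∨ ∃ e ∈ unitSteps, ∃ e' ∈ unitSteps, d = e + e' := by
  decide

lemma exists_plus_eq_swap : ∀ i, ∃ j, plus j = (plus i).swap := by decide

lemma swap_mem_shortSteps : ∀ d ∈ shortSteps, d.swap ∈ shortSteps := by decide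

lemma plus_sub_plus_mem : ∀ i j, i ≠ j → plus j - plus i ∈ shortSteps := by decide

lemma shortSteps_ne_zero_mod_five : ∀ d ∈ shortSteps, (d.1 : ZMod 5) + 2 * d.2 ≠ 0 := by decide

variable (m n : ℕ) [NeZero m] [NeZero n]

def toTorus : ℤ × ℤ →+ Fin m × Fin n :=
  (Int.castAddHom (Fin m)).prodMap (Int.castAddHom (Fin n))

variable {m n}

lemma toTorus_apply (p : ℤ × ℤ) : toTorus m n p = ((p.1 : Fin m), (p.2 : Fin n)) := rfl

lemma cycleGraph_adj_iff (hm : 2 ≤ m) {u v : Fin m} :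
    (cycleGraph m).Adj u v ↔ v = u + 1 ∨ v = u - 1 := by
  obtain ⟨k, rfl⟩ : ∃ k, m = k + 2 := ⟨m - 2, by omega⟩
  rw [cycleGraph_adj]
  grind

lemma toTorus_ne_zero (hm : 3 ≤ m) (hn : 3 ≤ n) {d : ℤ × ℤ} (hd : d ∈ shortSteps) :
    toTorus m n d ≠ 0 := by
  have : (d.1 ≠ 0 ∧ d.1.natAbs ≤ 2) ∨ (d.2 ≠ 0 ∧ d.2.natAbs ≤ 2) := by
    revert d; decide
  rw [toTorus_apply, Ne, Prod.mk_eq_zero, not_and_or]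
  rcases this with ⟨h0, h2⟩ | ⟨h0, h2⟩
  · exact .inl (Fin.intCast_ne_zero_of_natAbs_lt h0 (by omega))
  · exact .inr (Fin.intCast_ne_zero_of_natAbs_lt h0 (by omega))

lemma toroidalGrid_adj_iff (hm : 2 ≤ m) (hn : 2 ≤ n) {u v : Fin m × Fin n} :
    (toroidalGrid m n).Adj u v ↔ ∃ e ∈ unitSteps, v = u + toTorus m n e := by
  simp only [toroidalGrid, boxProd_adj, cycleGraph_adj_iff hm, cycleGraph_adj_iff hn,
    sub_eq_add_neg, unitSteps, List.mem_cons, List.not_mem_nil, or_false, toTorus_apply,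
    Prod.ext_iff, Prod.fst_add, Prod.snd_add, Prod.exists]
  constructor
  · rintro (⟨h | h, h'⟩ | ⟨h | h, h'⟩)
    exacts [⟨1, 0, by simp, h, by simp [h']⟩, ⟨-1, 0, by simp, by simpa using h, by simp [h']⟩,
      ⟨0, 1, by simp, by simp [h'], h⟩, ⟨0, -1, by simp, by simp [h'], by simpa using h⟩]
  · rintro ⟨a, b, ⟨rfl, rfl⟩ | ⟨rfl, rfl⟩ | ⟨rfl, rfl⟩ | ⟨rfl, rfl⟩, h, h'⟩ <;> simp_all

lemma square_toroidalGrid_adj_iff (hm : 3 ≤ m) (hn : 3 ≤ n) {u v : Fin m × Fin n} :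
    (toroidalGrid m n).square.Adj u v ↔ ∃ d ∈ shortSteps, v = u + toTorus m n d := by
  simp only [square, toroidalGrid_adj_iff (by omega : 2 ≤ m) (by omega : 2 ≤ n)]
  constructor
  · rintro ⟨huv, ⟨e, he, rfl⟩ | ⟨w, ⟨e, he, rfl⟩, ⟨e', he', rfl⟩⟩⟩
    · exact ⟨e, unitSteps_subset_shortSteps e he, rfl⟩
    · refine (add_unitSteps e he e' he').elim (fun h => absurd ?_ huv)
        fun h => ⟨e + e', h, by rw [map_add, add_assoc]⟩
      rw [add_assoc, ← map_add, h, map_zero, add_zero]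
  · rintro ⟨d, hd, rfl⟩
    refine ⟨fun h => toTorus_ne_zero hm hn hd (by simpa using h.symm), ?_⟩
    rcases shortSteps_eq_add_unitSteps d hd with hd | ⟨e, he, e', he', rfl⟩
    · exact .inl ⟨d, hd, rfl⟩
    · exact .inr ⟨_, ⟨e, he, rfl⟩, ⟨e', he', by rw [map_add, add_assoc]⟩⟩

lemma square_toroidalGrid_adj_plus (hm : 3 ≤ m) (hn : 3 ≤ n) (w : Fin m × Fin n) {i j : Fin 5}
    (hij : i ≠ j) :
    (toroidalGrid m n).square.Adj (w + toTorus m n (plus i)) (w + toTorus m n (plus j)) :=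
  (square_toroidalGrid_adj_iff hm hn).mpr
    ⟨_, plus_sub_plus_mem i j hij, by rw [add_assoc, ← map_add, add_sub_cancel]⟩

lemma five_le_chromaticNumber (hm : 3 ≤ m) (hn : 3 ≤ n) :
    5 ≤ (toroidalGrid m n).square.chromaticNumber :=
  le_chromaticNumber_of_pairwise_adj (by simp) (fun i => 0 + toTorus m n (plus i))
    fun _ _ => square_toroidalGrid_adj_plus hm hn 0

/-- `S` meets every closed neighbourhood `w + plus` and no two points of `S` are at distance at
most `2`; equivalently, every closed neighbourhood contains exactly one point of `S`. -/
structure IsPerfectCode (S : Set (Fin m × Fin n)) : Prop where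
  exists_add_plus_mem : ∀ w, ∃ i, w + toTorus m n (plus i) ∈ S
  add_notMem : ∀ v ∈ S, ∀ d ∈ shortSteps, v + toTorus m n d ∉ S

lemma isPerfectCode_colorClass (hm : 3 ≤ m) (hn : 3 ≤ n)
    (C : (toroidalGrid m n).square.Coloring (Fin 5)) (c : Fin 5) :
    IsPerfectCode (C.colorClass c) where
  exists_add_plus_mem w := by
    have := C.injective_comp_of_pairwise_adj _ fun _ _ => square_toroidalGrid_adj_plus hm hn w
    exact Finite.injective_iff_surjective.mp this c
  add_notMem v hv d hd hvd :=
    C.not_adj_of_mem_colorClass hv hvd ((square_toroidalGrid_adj_iff hm hn).mpr ⟨d, hd, rfl⟩)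

/-- The points of the closed neighbourhood of `c` at distance at least `3` from every point of `K`:
if `v + K ⊆ S`, the point of `S` near `v + c` is `v + q` for one of them. -/
def candidates (K : List (ℤ × ℤ)) (c : ℤ × ℤ) : List (ℤ × ℤ) :=
  (List.ofFn fun i => c + plus i).filter fun q => K.all fun s => q - s ∉ shortSteps

namespace IsPerfectCode

variable {S : Set (Fin m × Fin n)} (hS : IsPerfectCode S) {v : Fin m × Fin n}
include hS

lemma exists_mem_candidates {K : List (ℤ × ℤ)} (hK : ∀ s ∈ K, v + toTorus m n s ∈ S)
    (c : ℤ × ℤ) : ∃ q ∈ candidates K c, v + toTorus m n q ∈ S := by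
  obtain ⟨i, hi⟩ := hS.exists_add_plus_mem (v + toTorus m n c)
  rw [add_assoc, ← map_add] at hi
  refine ⟨c + plus i, ?_, hi⟩
  simp only [candidates, List.mem_filter, List.mem_ofFn, List.all_eq_true, decide_eq_true_eq]
  refine ⟨⟨i, rfl⟩, fun s hs hshort => hS.add_notMem _ (hK s hs) _ hshort ?_⟩
  rwa [add_assoc, ← map_add, add_sub_cancel]

lemma mem_of_candidates_eq {K : List (ℤ × ℤ)} (hK : ∀ s ∈ K, v + toTorus m n s ∈ S)
    {c t : ℤ × ℤ} (h : candidates K c = [t]) : v + toTorus m n t ∈ S := by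
  obtain ⟨q, hq, hmem⟩ := hS.exists_mem_candidates hK c
  rw [h, List.mem_singleton] at hq
  exact hq ▸ hmem

lemma mem_or_mem_of_mem (hv : v ∈ S) :
    v + toTorus m n (1, 2) ∈ S ∨ v + toTorus m n (2, 1) ∈ S := by
  obtain ⟨q, hq, hmem⟩ := hS.exists_mem_candidates (v := v) (K := [0]) (by simpa using hv) (1, 1)
  rw [show candidates [0] (1, 1) = [(2, 1), (1, 2)] by decide] at hq
  rcases List.mem_pair.mp hq with rfl | rfl
  exacts [.inr hmem, .inl hmem]

lemma add_mem_of_mem_of_add_mem (hv : v ∈ S) (h : v + toTorus m n (1, 2) ∈ S) :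
    v + toTorus m n (2, -1) ∈ S ∧ v + toTorus m n (3, 1) ∈ S ∧ v + toTorus m n (2, 4) ∈ S := by
  have h31 := hS.mem_of_candidates_eq (v := v) (K := [0, (1, 2)]) (by simp [hv, h]) (c := (2, 1))
    (t := (3, 1)) (by decide)
  have hK : ∀ s ∈ [0, (1, 2), (3, 1)], v + toTorus m n s ∈ S := by simp [hv, h, h31]
  exact ⟨hS.mem_of_candidates_eq hK (c := (2, 0)) (t := (2, -1)) (by decide), h31,
    hS.mem_of_candidates_eq hK (c := (2, 3)) (t := (2, 4)) (by decide)⟩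

lemma add_mem_of_mem_closure {g : Fin m × Fin n} (hv : v ∈ S) (h : v + toTorus m n (1, 2) ∈ S)
    (hg : g ∈ AddSubgroup.closure {toTorus m n (1, 2), toTorus m n (2, -1)}) :
    v + g ∈ S ∧ v + g + toTorus m n (1, 2) ∈ S := by
  rw [← AddSubgroup.mem_toAddSubmonoid, AddSubgroup.closure_toAddSubmonoid_of_finite] at hg
  induction hg using AddSubmonoid.closure_induction generalizing v with
  | mem g hg =>
    obtain ⟨h21, h31, h24⟩ := hS.add_mem_of_mem_of_add_mem hv h
    rcases hg with rfl | rfl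
    · rw [add_assoc, ← map_add]
      exact ⟨h, h24⟩
    · rw [add_assoc, ← map_add]
      exact ⟨h21, h31⟩
  | zero => simpa using ⟨hv, h⟩
  | add g g' _ _ ih ih' =>
    obtain ⟨hg, hg'⟩ := ih hv h
    simpa only [add_assoc] using ih' hg hg'

lemma add_mem_of_five_dvd (hv : v ∈ S) (h : v + toTorus m n (1, 2) ∈ S)
    {x y : ℤ} (hxy : 5 ∣ x + 2 * y) : v + toTorus m n (x, y) ∈ S := by
  obtain ⟨k, hk⟩ := hxy
  have hlattice : ((x, y) : ℤ × ℤ) = k • (1, 2) + (2 * k - y) • (2, -1) := by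
    ext <;> simp <;> linarith
  refine (hS.add_mem_of_mem_closure hv h ?_).1
  rw [hlattice, map_add, map_zsmul, map_zsmul]
  exact add_mem (zsmul_mem (AddSubgroup.subset_closure (by simp)) _)
    (zsmul_mem (AddSubgroup.subset_closure (by simp)) _)

lemma five_dvd_of_mem_of_add_mem (hv : v ∈ S)
    (h : v + toTorus m n (1, 2) ∈ S) : 5 ∣ m ∧ 5 ∣ n := by
  constructor
  · by_contra hm
    obtain ⟨j, hj, hdvd⟩ : ∃ j : ℤ, (0, j) ∈ shortSteps ∧ 5 ∣ (m : ℤ) + 2 * j := by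
      rcases (by omega : m % 5 = 1 ∨ m % 5 = 2 ∨ m % 5 = 3 ∨ m % 5 = 4) with h | h | h | h
      exacts [⟨2, by decide, by omega⟩, ⟨-1, by decide, by omega⟩, ⟨1, by decide, by omega⟩,
        ⟨-2, by decide, by omega⟩]
    refine hS.add_notMem v hv _ hj ?_
    simpa [toTorus_apply] using hS.add_mem_of_five_dvd hv h hdvd
  · by_contra hn
    obtain ⟨i, hi, hdvd⟩ : ∃ i : ℤ, (i, 0) ∈ shortSteps ∧ 5 ∣ i + 2 * (n : ℤ) := by
      rcases (by omega : n % 5 = 1 ∨ n % 5 = 2 ∨ n % 5 = 3 ∨ n % 5 = 4) with h | h | h | h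
      exacts [⟨-2, by decide, by omega⟩, ⟨1, by decide, by omega⟩, ⟨-1, by decide, by omega⟩,
        ⟨2, by decide, by omega⟩]
    refine hS.add_notMem v hv _ hi ?_
    simpa [toTorus_apply] using hS.add_mem_of_five_dvd hv h hdvd

lemma swap : IsPerfectCode (Prod.swap ⁻¹' S : Set (Fin n × Fin m)) where
  exists_add_plus_mem w := by
    obtain ⟨i, hi⟩ := hS.exists_add_plus_mem w.swap
    obtain ⟨j, hj⟩ := exists_plus_eq_swap i
    exact ⟨j, by simpa [hj, toTorus_apply] using hi⟩
  add_notMem v hv d hd hvd :=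
    hS.add_notMem v.swap hv d.swap (swap_mem_shortSteps d hd) (by simpa [toTorus_apply] using hvd)

lemma five_dvd (hne : S.Nonempty) : 5 ∣ m ∧ 5 ∣ n := by
  obtain ⟨v, hv⟩ := hne
  rcases hS.mem_or_mem_of_mem hv with h | h
  · exact hS.five_dvd_of_mem_of_add_mem hv h
  · exact (hS.swap.five_dvd_of_mem_of_add_mem (v := v.swap) hv
      (by simpa [toTorus_apply] using h)).symm

end IsPerfectCode

lemma colorable_five (hm : 3 ≤ m) (hn : 3 ≤ n) (h5m : 5 ∣ m) (h5n : 5 ∣ n) :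
    (toroidalGrid m n).square.Colorable 5 := by
  let f : Fin m →+* ZMod 5 := (ZMod.castHom h5m (ZMod 5)).comp (ZMod.finEquiv m).toRingHom
  let g : Fin n →+* ZMod 5 := (ZMod.castHom h5n (ZMod 5)).comp (ZMod.finEquiv n).toRingHom
  let C : (toroidalGrid m n).square.Coloring (ZMod 5) :=
    Coloring.mk (fun v => f v.1 + 2 * g v.2) fun {u v} huv hc => by
      obtain ⟨d, hd, rfl⟩ := (square_toroidalGrid_adj_iff hm hn).mp huv
      refine shortSteps_ne_zero_mod_five d hd ?_
      simp only [toTorus_apply, Prod.fst_add, Prod.snd_add, map_add, map_intCast] at hc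
      linear_combination -hc
  simpa using C.colorable

lemma colorable_five_iff (hm : 3 ≤ m) (hn : 3 ≤ n) :
    (toroidalGrid m n).square.Colorable 5 ↔ 5 ∣ m ∧ 5 ∣ n := by
  refine ⟨fun ⟨C⟩ => ?_, fun h => colorable_five hm hn h.1 h.2⟩
  exact (isPerfectCode_colorClass hm hn C (C 0)).five_dvd ⟨0, C.mem_colorClass 0⟩

end ToroidalGrid

open ToroidalGrid in
theorem stmt12 (m n : ℕ) (hm : 3 ≤ m) (hn : 3 ≤ n) :
    5 ≤ (toroidalGrid m n).square.chromaticNumber ∧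
    ((toroidalGrid m n).square.chromaticNumber = 5 ↔ m % 5 = 0 ∧ n % 5 = 0) := by
  have : NeZero m := ⟨by omega⟩
  have : NeZero n := ⟨by omega⟩
  have h5 := five_le_chromaticNumber hm hn
  refine ⟨h5, ?_⟩
  rw [← h5.ge_iff_eq', ← Nat.dvd_iff_mod_eq_zero, ← Nat.dvd_iff_mod_eq_zero,
    ← colorable_five_iff hm hn]
  exact chromaticNumber_le_iff_colorable
end

section
/- For every integer n ≥ 3, the independence number of the square of T_{3,n} = C_3 □ C_n satisfies α(T_{3,n}²) ≤ ⌊n/2⌋. -/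
open SimpleGraph

/-!
Since `C_3` is complete, two distinct vertices of `T_{3,n}` in the same column, or in adjacent
columns, are at distance at most 2. Hence an independent set of `T_{3,n}²` meets each column at
most once and its columns form an independent set of `C_n`. Finally an independent set `s` of
`C_n` is disjoint from its translate `s + 1`, so `2 |s| ≤ n`.
-/

namespace SimpleGraph

theorem indepNum'_eq_indepNum {V : Type*} (G : SimpleGraph V) : G.indepNum' = G.indepNum :=
  cliqueNum_compl

theorem IsIndepSet.two_mul_card_le_of_cycleGraph {m : ℕ} {s : Finset (Fin (m + 2))}
    (hs : (cycleGraph (m + 2)).IsIndepSet s) : 2 * s.card ≤ m + 2 := by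
  have hdisj : Disjoint s (s.map (Equiv.addRight 1).toEmbedding) := by
    refine Finset.disjoint_left.mpr fun x hx hx' => ?_
    obtain ⟨y, hy, rfl⟩ := Finset.mem_map.mp hx'
    have hxy : (y + 1) - y = 1 := add_sub_cancel_left y 1
    refine hs hx hy (fun h => ?_) (cycleGraph_adj.mpr (Or.inl hxy))
    rw [show y + 1 = y from h, sub_self] at hxy
    exact zero_ne_one hxy
  calc 2 * s.card = (s ∪ s.map (Equiv.addRight 1).toEmbedding).card := by
        rw [Finset.card_union_of_disjoint hdisj, Finset.card_map, two_mul]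
    _ ≤ m + 2 := (Finset.card_le_univ _).trans_eq (Fintype.card_fin _)

section BoxProdTop

variable {α β : Type*} {H : SimpleGraph β}

theorem square_boxProd_top_adj {u v : α × β} (huv : u ≠ v) (h : u.2 = v.2 ∨ H.Adj u.2 v.2) :
    ((⊤ : SimpleGraph α) □ H).square.Adj u v := by
  refine ⟨huv, ?_⟩
  by_cases h₁ : u.1 = v.1
  · have h₂ : u.2 ≠ v.2 := fun h₂ => huv (Prod.ext h₁ h₂)
    exact Or.inl (Or.inr ⟨h.resolve_left h₂, h₁⟩)
  · rcases h with h₂ | h₂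
    · exact Or.inl (Or.inl ⟨h₁, h₂⟩)
    · exact Or.inr ⟨(v.1, u.2), Or.inl ⟨h₁, rfl⟩, Or.inr ⟨h₂, rfl⟩⟩

variable {s : Set (α × β)}

theorem IsIndepSet.injOn_snd_of_square_boxProd_top
    (hs : ((⊤ : SimpleGraph α) □ H).square.IsIndepSet s) : s.InjOn Prod.snd :=
  fun _ hu _ hv h => by_contra fun huv => hs hu hv huv (square_boxProd_top_adj huv (Or.inl h))

theorem IsIndepSet.image_snd_of_square_boxProd_top
    (hs : ((⊤ : SimpleGraph α) □ H).square.IsIndepSet s) : H.IsIndepSet (Prod.snd '' s) := by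
  rintro _ ⟨_, hu, rfl⟩ _ ⟨_, hv, rfl⟩ hne hadj
  exact hs hu hv (fun h => hne (congrArg Prod.snd h))
    (square_boxProd_top_adj (fun h => hne (congrArg Prod.snd h)) (Or.inr hadj))

end BoxProdTop

end SimpleGraph

theorem stmt13 (n : ℕ) (hn : 3 ≤ n) :
    (toroidalGrid 3 n).square.indepNum' ≤ n / 2 := by
  obtain ⟨m, rfl⟩ : ∃ m, n = m + 2 := ⟨n - 2, by omega⟩
  obtain ⟨s, hs, hcard⟩ := (toroidalGrid 3 (m + 2)).square.exists_isNIndepSet_indepNum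
  rw [toroidalGrid, cycleGraph_three_eq_top] at hs
  have hcols : (cycleGraph (m + 2)).IsIndepSet (s.image Prod.snd : Set (Fin (m + 2))) := by
    rw [Finset.coe_image]
    exact hs.image_snd_of_square_boxProd_top
  have hcard_cols : (s.image Prod.snd).card = s.card :=
    Finset.card_image_of_injOn hs.injOn_snd_of_square_boxProd_top
  have hbound := hcols.two_mul_card_le_of_cycleGraph
  rw [indepNum'_eq_indepNum]
  omega
end
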